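/- arXiv:2408.12385 — 4 statements merged into one kernel-verified Lean document; each statement's English description precedes it below -/
import Mathlib

section
/- Let p and q be probability measures supported on [-1,1] and let k be a positive integer. If the Chebyshev moments satisfy Σ_{j=1}^{k} (1/j²)·(∫ T_j dp − ∫ T_j dq)² ≤ Γ² for some Γ ≥ 0, then for every 1-Lipschitz function f : ℝ → ℝ one has ∫ f dp − ∫ f dq ≤ 36/k + Γ (i.e., the Wasserstein-1 distance W₁(p,q) is at most 36/k + Γ). -/
open MeasureTheory Real

noncomputable section

/-- The Chebyshev polynomials of the first kind. -/
def chebT : ℕ → ℝ → ℝ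
  | 0, _ => 1
  | 1, x => x
  | n + 2, x => 2 * x * chebT (n + 1) x - chebT n x

open Filter Topology

namespace ChebAux


lemma chebT_cos (n : ℕ) (θ : ℝ) : chebT n (cos θ) = cos (n * θ) := by
  induction n using Nat.twoStepInduction with
  | zero => simp [chebT]
  | one => simp [chebT]
  | more n ih1 ih2 =>
    show 2 * cos θ * chebT (n+1) (cos θ) - chebT n (cos θ) = _
    rw [ih1, ih2]
    rw [show ((n + 2 : ℕ) : ℝ) = (n : ℝ) + 2 by push_cast; ring,
        show ((n:ℝ) + 2) * θ = ((n + 1) * θ) + θ by ring, cos_add,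
        show ((n + 1 : ℕ) : ℝ) = (n:ℝ) + 1 by push_cast; ring,
        show (n:ℝ) * θ = ((n:ℝ)+1) * θ - θ by ring, cos_sub]
    ring

lemma continuous_chebT (n : ℕ) : Continuous (chebT n) := by
  induction n using Nat.twoStepInduction with
  | zero => simpa [chebT] using continuous_const
  | one => simpa [chebT] using continuous_id'
  | more n ih1 ih2 =>
    show Continuous (fun x => 2 * x * chebT (n+1) x - chebT n x)
    continuity

lemma abs_chebT_le (n : ℕ) {x : ℝ} (hx : x ∈ Set.Icc (-1:ℝ) 1) : |chebT n x| ≤ 1 := by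
  rw [show x = cos (arccos x) from (Real.cos_arccos hx.1 hx.2).symm, chebT_cos]
  exact abs_cos_le_one _

lemma hasDerivAt_cos_nat (l : ℕ) (θ : ℝ) :
    HasDerivAt (fun t => cos ((l:ℝ) * t)) (-((l:ℝ) * sin ((l:ℝ)*θ))) θ := by
  have h1 : HasDerivAt (fun t : ℝ => (l:ℝ) * t) (l:ℝ) θ := by
    simpa using (hasDerivAt_id θ).const_mul (l:ℝ)
  have h2 := (Real.hasDerivAt_cos ((l:ℝ) * θ)).comp θ h1
  rw [show -((l:ℝ) * sin ((l:ℝ)*θ)) = -sin ((l:ℝ)*θ) * l by ring]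
  exact h2

lemma integral_cos_int (n : ℤ) :
    ∫ θ in (0:ℝ)..(2*π), cos (n * θ) = if n = 0 then 2*π else 0 := by
  rcases eq_or_ne n 0 with h | h
  · simp [h, two_pi_pos.le]
  · simp only [h, if_false]
    have hn : (n:ℝ) ≠ 0 := Int.cast_ne_zero.mpr h
    have key : ∀ θ : ℝ, HasDerivAt (fun t => sin ((n:ℝ) * t) / n) (cos ((n:ℝ) * θ)) θ := by
      intro θ
      have h1 : HasDerivAt (fun t : ℝ => (n:ℝ) * t) (n:ℝ) θ := by
        simpa using (hasDerivAt_id θ).const_mul (n:ℝ)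
      have := ((Real.hasDerivAt_sin ((n:ℝ) * θ)).comp θ h1).div_const (n:ℝ)
      refine this.congr_deriv ?_
      field_simp
    rw [intervalIntegral.integral_eq_sub_of_hasDerivAt (fun θ _ => key θ)
      (by apply Continuous.intervalIntegrable; continuity)]
    have h2 : sin ((n:ℝ) * (2*π)) = 0 := by
      rw [show (n:ℝ)*(2*π) = ((2*n:ℤ):ℝ)*π by push_cast; ring]
      exact Real.sin_int_mul_pi _
    simp [h2]

lemma integral_sin_int (n : ℤ) :
    ∫ θ in (0:ℝ)..(2*π), sin (n * θ) = 0 := by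
  rcases eq_or_ne n 0 with h | h
  · simp [h]
  · have hn : (n:ℝ) ≠ 0 := Int.cast_ne_zero.mpr h
    have key : ∀ θ : ℝ, HasDerivAt (fun t => -cos ((n:ℝ) * t) / n) (sin ((n:ℝ) * θ)) θ := by
      intro θ
      have h1 : HasDerivAt (fun t : ℝ => (n:ℝ) * t) (n:ℝ) θ := by
        simpa using (hasDerivAt_id θ).const_mul (n:ℝ)
      have := (((Real.hasDerivAt_cos ((n:ℝ) * θ)).comp θ h1).neg).div_const (n:ℝ)
      refine this.congr_deriv ?_
      field_simp
      try ring
    rw [intervalIntegral.integral_eq_sub_of_hasDerivAt (fun θ _ => key θ)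
      (by apply Continuous.intervalIntegrable; continuity)]
    have h2 : cos ((n:ℝ) * (2*π)) = 1 := Real.cos_int_mul_two_pi n
    rw [h2]
    simp

lemma cos_mul_cos (a b : ℝ) : cos a * cos b = (cos (a - b) + cos (a + b)) / 2 := by
  rw [cos_sub, cos_add]; ring

lemma sin_mul_sin (a b : ℝ) : sin a * sin b = (cos (a - b) - cos (a + b)) / 2 := by
  rw [cos_sub, cos_add]; ring

lemma integral_cos_mul_cos (i j : ℕ) :
    ∫ θ in (0:ℝ)..(2*π), cos (i * θ) * cos (j * θ)
      = if i = j then (if i = 0 then 2*π else π) else 0 := by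
  have h : ∀ θ:ℝ, cos (i*θ) * cos (j*θ)
      = (cos (((i - j : ℤ):ℝ) * θ) + cos (((i + j : ℤ):ℝ) * θ))/2 := by
    intro θ
    simp only [Int.cast_sub, Int.cast_add, Int.cast_natCast]
    rw [cos_mul_cos]
    ring_nf
  rw [intervalIntegral.integral_congr (fun θ _ => h θ)]
  have hi : IntervalIntegrable (fun θ => cos (((i - j : ℤ):ℝ) * θ)) volume 0 (2*π) := by
    apply Continuous.intervalIntegrable; continuity
  have hj : IntervalIntegrable (fun θ => cos (((i + j : ℤ):ℝ) * θ)) volume 0 (2*π) := by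
    apply Continuous.intervalIntegrable; continuity
  simp only [div_eq_mul_inv]
  rw [intervalIntegral.integral_mul_const, intervalIntegral.integral_add hi hj,
    integral_cos_int, integral_cos_int]
  rcases eq_or_ne i j with h1 | h1
  · subst h1
    rcases eq_or_ne i 0 with h2 | h2
    · simp [h2]; ring
    · have h3 : ((i:ℤ) + i) ≠ 0 := by positivity
      simp [h2, sub_self, h3]
      ring
  · have h2 : ((i:ℤ) - j) ≠ 0 := sub_ne_zero.mpr (by exact_mod_cast h1)
    rcases eq_or_ne ((i:ℤ) + j) 0 with h4 | h4
    · exact absurd (by omega : i = j) h1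
    · simp [h1, h2, h4]

lemma integral_sin_mul_sin (i j : ℕ) :
    ∫ θ in (0:ℝ)..(2*π), sin (i * θ) * sin (j * θ)
      = if i = j then (if i = 0 then 0 else π) else 0 := by
  have h : ∀ θ:ℝ, sin (i*θ) * sin (j*θ)
      = (cos (((i - j : ℤ):ℝ) * θ) - cos (((i + j : ℤ):ℝ) * θ))/2 := by
    intro θ
    simp only [Int.cast_sub, Int.cast_add, Int.cast_natCast]
    rw [sin_mul_sin]
    ring_nf
  rw [intervalIntegral.integral_congr (fun θ _ => h θ)]
  have hi : IntervalIntegrable (fun θ => cos (((i - j : ℤ):ℝ) * θ)) volume 0 (2*π) := by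
    apply Continuous.intervalIntegrable; continuity
  have hj : IntervalIntegrable (fun θ => cos (((i + j : ℤ):ℝ) * θ)) volume 0 (2*π) := by
    apply Continuous.intervalIntegrable; continuity
  simp only [div_eq_mul_inv]
  rw [intervalIntegral.integral_mul_const, intervalIntegral.integral_sub hi hj,
    integral_cos_int, integral_cos_int]
  rcases eq_or_ne i j with h1 | h1
  · subst h1
    rcases eq_or_ne i 0 with h2 | h2
    · simp [h2]
    · have h3 : ((i:ℤ) + i) ≠ 0 := by positivity
      simp [h2, sub_self, h3]
      ring
  · have h2 : ((i:ℤ) - j) ≠ 0 := sub_ne_zero.mpr (by exact_mod_cast h1)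
    rcases eq_or_ne ((i:ℤ) + j) 0 with h4 | h4
    · exact absurd (by omega : i = j) h1
    · simp [h1, h2, h4]



/-- Fejér coefficients -/
def uu (m l : ℕ) : ℝ := if l = 0 then m else 2 * ((m:ℝ) - l)

/-- Fejér kernel (order m), nonneg trig poly of degree m-1 -/
def Fej (m : ℕ) (t : ℝ) : ℝ := ∑ l ∈ Finset.range m, uu m l * cos (l * t)

/-- Jackson kernel numerator -/
def NN (m : ℕ) (t : ℝ) : ℝ := (Fej m t)^2

def cN (m : ℕ) : ℝ := ∫ t in (0:ℝ)..(2*π), NN m t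

lemma continuous_Fej (m : ℕ) : Continuous (Fej m) := by
  apply continuous_finset_sum
  intro l _
  continuity

lemma continuous_NN (m : ℕ) : Continuous (NN m) := ((continuous_Fej m).pow 2)

lemma NN_nonneg (m : ℕ) (t : ℝ) : 0 ≤ NN m t := sq_nonneg _

lemma Fej_even (m : ℕ) (t : ℝ) : Fej m (-t) = Fej m t := by
  unfold Fej
  refine Finset.sum_congr rfl (fun l _ => ?_)
  rw [show (l:ℝ) * (-t) = -((l:ℝ)*t) by ring, cos_neg]

lemma NN_even (m : ℕ) (t : ℝ) : NN m (-t) = NN m t := by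
  unfold NN; rw [Fej_even]

lemma Fej_periodic (m : ℕ) : Function.Periodic (Fej m) (2*π) := by
  intro t
  unfold Fej
  refine Finset.sum_congr rfl (fun l _ => ?_)
  rw [show (l:ℝ) * (t + 2*π) = (l:ℝ)*t + (l:ℤ)*(2*π) by push_cast; ring,
    Real.cos_add_int_mul_two_pi]

lemma NN_periodic (m : ℕ) : Function.Periodic (NN m) (2*π) := by
  intro t; unfold NN; rw [Fej_periodic]

lemma uu_diff (m l : ℕ) : uu (m+1) l - uu m l = if l = 0 then 1 else 2 := by
  unfold uu
  rcases eq_or_ne l 0 with h | h <;> simp [h] <;> push_cast <;> ring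

lemma uu_zero_self (m : ℕ) : uu m m = 0 := by
  unfold uu
  rcases eq_or_ne m 0 with h | h <;> simp [h]

lemma Fej_succ_sub (m : ℕ) (t : ℝ) :
    Fej (m+1) t - Fej m t = ∑ l ∈ Finset.range (m+1), (if l = 0 then 1 else 2) * cos (l*t) := by
  have h1 : Fej m t = ∑ l ∈ Finset.range (m+1), uu m l * cos (l * t) := by
    rw [Finset.sum_range_succ, uu_zero_self]
    simp [Fej]
  rw [h1]
  unfold Fej
  rw [← Finset.sum_sub_distrib]
  refine Finset.sum_congr rfl (fun l _ => ?_)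
  rw [← sub_mul, uu_diff]

lemma dirichlet (j : ℕ) (t : ℝ) :
    sin (t/2) * (∑ l ∈ Finset.range (j+1), (if l = 0 then 1 else 2) * cos (l*t))
      = sin ((2*(j:ℝ)+1) * t/2) := by
  induction j with
  | zero => norm_num
  | succ j ih =>
    rw [Finset.sum_range_succ, mul_add, ih]
    have key : sin ((2*((j:ℝ)+1)+1) * t/2) - sin ((2*(j:ℝ)+1) * t/2)
        = 2 * sin (t/2) * cos ((j+1)*t) := by
      rw [Real.sin_sub_sin]
      have e1 : ((2*((j:ℝ)+1)+1) * t/2 - (2*(j:ℝ)+1) * t/2)/2 = t/2 := by ring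
      have e2 : ((2*((j:ℝ)+1)+1) * t/2 + (2*(j:ℝ)+1) * t/2)/2 = ((j:ℝ)+1)*t := by ring
      rw [e1, e2]
    push_cast
    push_cast at key
    have hne : ¬ (j + 1 = 0) := by omega
    first
      | (simp only [hne, if_false]; nlinarith [key])
      | nlinarith [key]

lemma fejer_eq (m : ℕ) (t : ℝ) : sin (t/2)^2 * Fej m t = sin ((m:ℝ)*t/2)^2 := by
  induction m with
  | zero => simp [Fej]
  | succ m ih =>
    have h1 : Fej (m+1) t = Fej m t + ∑ l ∈ Finset.range (m+1), (if l = 0 then 1 else 2) * cos (l*t) := by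
      have := Fej_succ_sub m t; linarith
    rw [h1, mul_add, ih]
    have h2 : sin (t/2)^2 * (∑ l ∈ Finset.range (m+1), (if l = 0 then 1 else 2) * cos (l*t))
        = sin (t/2) * sin ((2*(m:ℝ)+1) * t/2) := by
      rw [← dirichlet m t]; ring
    rw [h2]
    have h3 : sin (((m:ℝ)+1)*t/2)^2 - sin ((m:ℝ)*t/2)^2
        = sin (t/2) * sin ((2*(m:ℝ)+1)*t/2) := by
      rw [Real.sin_sq_eq_half_sub, Real.sin_sq_eq_half_sub]
      have hc : cos (2*((m:ℝ)*t/2)) - cos (2*(((m:ℝ)+1)*t/2))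
          = 2 * sin ((2*(m:ℝ)+1)*t/2) * sin (t/2) := by
        rw [Real.cos_sub_cos]
        have e1 : (2*((m:ℝ)*t/2) + 2*(((m:ℝ)+1)*t/2))/2 = (2*(m:ℝ)+1)*t/2 := by ring
        have e2 : (2*((m:ℝ)*t/2) - 2*(((m:ℝ)+1)*t/2))/2 = -(t/2) := by ring
        rw [e1, e2, Real.sin_neg]
        ring
      nlinarith [hc]
    push_cast
    push_cast at h3
    nlinarith [h3]

lemma abs_sin_nat_mul_le (m : ℕ) (x : ℝ) : |sin ((m:ℝ)*x)| ≤ (m:ℝ) * |sin x| := by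
  induction m with
  | zero => simp
  | succ m ih =>
    have h1 : sin (((m:ℝ)+1)*x) = sin ((m:ℝ)*x) * cos x + cos ((m:ℝ)*x) * sin x := by
      rw [show ((m:ℝ)+1)*x = (m:ℝ)*x + x by ring, sin_add]
    push_cast
    rw [h1]
    have b0 := abs_add_le (sin ((m:ℝ)*x) * cos x) (cos ((m:ℝ)*x) * sin x)
    have b1 : |sin ((m:ℝ)*x) * cos x| ≤ |sin ((m:ℝ)*x)| := by
      rw [abs_mul]; exact mul_le_of_le_one_right (abs_nonneg _) (abs_cos_le_one _)
    have b2 : |cos ((m:ℝ)*x) * sin x| ≤ |sin x| := by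
      rw [abs_mul]; exact mul_le_of_le_one_left (abs_nonneg _) (abs_cos_le_one _)
    linarith

lemma sum_range_id_real (n : ℕ) : ∑ i ∈ Finset.range n, (i:ℝ) = n*(n-1)/2 := by
  induction n with
  | zero => simp
  | succ n ih => rw [Finset.sum_range_succ, ih]; push_cast; ring

lemma sum_range_sq_real (n : ℕ) : ∑ i ∈ Finset.range n, (i:ℝ)^2 = n*(n-1)*(2*n-1)/6 := by
  induction n with
  | zero => simp
  | succ n ih => rw [Finset.sum_range_succ, ih]; push_cast; ring

lemma abs_Fej_le (m : ℕ) (t : ℝ) : |Fej m t| ≤ (m:ℝ)^2 := by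
  rcases Nat.eq_zero_or_pos m with h | h
  · simp [h, Fej]
  calc |Fej m t| ≤ ∑ l ∈ Finset.range m, |uu m l * cos (l*t)| := Finset.abs_sum_le_sum_abs _ _
    _ ≤ ∑ l ∈ Finset.range m, |uu m l| := by
        refine Finset.sum_le_sum (fun l _ => ?_)
        rw [abs_mul]
        exact mul_le_of_le_one_right (abs_nonneg _) (abs_cos_le_one _)
    _ = ∑ l ∈ Finset.range m, (if l = 0 then (m:ℝ) else 2*((m:ℝ) - l)) := by
        refine Finset.sum_congr rfl (fun l hl => ?_)
        have hl' : l < m := Finset.mem_range.mp hl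
        unfold uu
        rcases eq_or_ne l 0 with h0 | h0
        · simp [h0, abs_of_nonneg (by positivity : (0:ℝ) ≤ (m:ℝ))]
        · simp only [h0, if_false]
          rw [abs_of_nonneg]
          have : (l:ℝ) ≤ (m:ℝ) := by exact_mod_cast hl'.le
          nlinarith
    _ = (m:ℝ)^2 := by
        have e : ∀ l ∈ Finset.range m, (if l = 0 then (m:ℝ) else 2*((m:ℝ)-l))
            = 2*((m:ℝ)-l) + (if l = 0 then (-(m:ℝ)) else 0) := by
          intro l _
          rcases eq_or_ne l 0 with h0 | h0 <;> simp [h0] <;> ring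
        rw [Finset.sum_congr rfl e, Finset.sum_add_distrib,
          Finset.sum_ite_eq' (Finset.range m) 0 (fun _ => (-(m:ℝ)))]
        have h0m : (0:ℕ) ∈ Finset.range m := Finset.mem_range.mpr h
        simp only [h0m, if_true]
        have hsum : ∑ l ∈ Finset.range m, (2*((m:ℝ)-(l:ℝ)))
            = 2*((m:ℝ)*(m:ℝ)) - 2*((m:ℝ)*((m:ℝ)-1)/2) := by
          rw [← Finset.mul_sum, Finset.sum_sub_distrib, Finset.sum_const, sum_range_id_real]
          simp [Finset.card_range, nsmul_eq_mul]
          ring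
        rw [hsum]
        ring

lemma NN_le_m4 (m : ℕ) (t : ℝ) : NN m t ≤ (m:ℝ)^4 := by
  have h := abs_Fej_le m t
  have : NN m t = |Fej m t|^2 := by rw [sq_abs]; rfl
  rw [this, show (m:ℝ)^4 = ((m:ℝ)^2)^2 by ring]
  exact pow_le_pow_left₀ (abs_nonneg _) h 2

lemma NN_le_pi4 (m : ℕ) {t : ℝ} (ht0 : 0 < t) (htpi : t ≤ π) : NN m t ≤ π^4 / t^4 := by
  have hs : t/π ≤ sin (t/2) := by
    have := Real.mul_le_sin (x := t/2) (by linarith) (by linarith)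
    calc t/π = 2/π * (t/2) := by field_simp
      _ ≤ sin (t/2) := this
  have hs0 : 0 < t/π := by positivity
  have hsin : 0 < sin (t/2) := lt_of_lt_of_le hs0 hs
  have hkey : NN m t * sin (t/2)^4 = sin ((m:ℝ)*t/2)^4 := by
    have := fejer_eq m t
    unfold NN
    nlinarith [this]
  have h1 : NN m t * sin (t/2)^4 ≤ 1 := by
    rw [hkey]
    have hsq := Real.sin_sq_le_one ((m:ℝ)*t/2)
    nlinarith [sq_nonneg (sin ((m:ℝ)*t/2)^2)]
  rw [le_div_iff₀ (by positivity : (0:ℝ) < t^4)]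
  have ht : t ≤ π * sin (t/2) := by
    rw [div_le_iff₀ Real.pi_pos] at hs
    linarith [hs]
  have ht4 : t^4 ≤ (π * sin (t/2))^4 := by
    apply pow_le_pow_left₀ ht0.le ht
  have hexp : (π * sin (t/2))^4 = π^4 * sin (t/2)^4 := by ring
  have hmul := mul_le_mul_of_nonneg_left ht4 (NN_nonneg m t)
  calc NN m t * t^4 ≤ NN m t * (π * sin (t/2))^4 := hmul
    _ = π^4 * (NN m t * sin (t/2)^4) := by rw [hexp]; ring
    _ ≤ π^4 * 1 := by
        apply mul_le_mul_of_nonneg_left h1 (by positivity)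
    _ = π^4 := mul_one _

lemma cN_eq (m : ℕ) (hm : 0 < m) :
    cN m = π * (∑ l ∈ Finset.range m, (uu m l)^2) + π * (uu m 0)^2 := by
  have hNN : ∀ t : ℝ, NN m t = ∑ i ∈ Finset.range m, ∑ j ∈ Finset.range m,
      (uu m i * uu m j) * (cos (i*t) * cos (j*t)) := by
    intro t
    unfold NN Fej
    rw [sq, Finset.sum_mul_sum]
    refine Finset.sum_congr rfl (fun i _ => Finset.sum_congr rfl (fun j _ => by ring))
  unfold cN
  rw [intervalIntegral.integral_congr (fun t _ => hNN t)]
  rw [intervalIntegral.integral_finset_sum (fun i _ => by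
    apply Continuous.intervalIntegrable
    apply continuous_finset_sum
    intro j _
    continuity)]
  have hin : ∀ i ∈ Finset.range m,
      (∫ t in (0:ℝ)..(2*π), ∑ j ∈ Finset.range m, (uu m i * uu m j) * (cos (i*t) * cos (j*t)))
      = (uu m i)^2 * (if i = 0 then 2*π else π) := by
    intro i hi
    rw [intervalIntegral.integral_finset_sum (fun j _ => by
      apply Continuous.intervalIntegrable; continuity)]
    have : ∀ j ∈ Finset.range m,
        (∫ t in (0:ℝ)..(2*π), (uu m i * uu m j) * (cos (i*t) * cos (j*t)))
        = if i = j then (uu m i)^2 * (if i = 0 then 2*π else π) else 0 := by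
      intro j _
      rw [intervalIntegral.integral_const_mul, integral_cos_mul_cos]
      rcases eq_or_ne i j with h | h
      · subst h
        simp only [if_pos rfl, sq]
        split_ifs <;> ring
      · simp [h]
    rw [Finset.sum_congr rfl this, Finset.sum_ite_eq (Finset.range m) i
      (fun i' => (uu m i)^2 * (if i = 0 then 2*π else π))]
    simp [‹i ∈ Finset.range m›]
  rw [Finset.sum_congr rfl hin]
  have : ∀ i ∈ Finset.range m, (uu m i)^2 * (if i = 0 then 2*π else π)
      = π * (uu m i)^2 + (if i = 0 then π * (uu m i)^2 else 0) := by
    intro i _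
    split_ifs with h <;> ring
  rw [Finset.sum_congr rfl this, Finset.sum_add_distrib,
    Finset.sum_ite_eq' (Finset.range m) 0 (fun i => π * (uu m i)^2)]
  simp only [Finset.mem_range.mpr hm, if_true, ← Finset.mul_sum]

lemma cN_lower (m : ℕ) (hm : 0 < m) : 4*π/3 * (m:ℝ)^3 ≤ cN m := by
  rw [cN_eq m hm]
  have h1 : ∀ l ∈ Finset.range m, (uu m l)^2
      = 4*((m:ℝ)-l)^2 + (if l = 0 then ((m:ℝ)^2 - 4*(m:ℝ)^2) else 0) := by
    intro l _
    unfold uu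
    split_ifs with h
    · subst h; push_cast; ring
    · ring
  rw [Finset.sum_congr rfl h1, Finset.sum_add_distrib,
    Finset.sum_ite_eq' (Finset.range m) 0 (fun _ => ((m:ℝ)^2 - 4*(m:ℝ)^2))]
  simp only [Finset.mem_range.mpr hm, if_true]
  have h2 : ∑ l ∈ Finset.range m, ((m:ℝ)-l)^2
      = (m:ℝ)*(m:ℝ)^2 - 2*(m:ℝ)*((m:ℝ)*((m:ℝ)-1)/2) + (m:ℝ)*((m:ℝ)-1)*(2*(m:ℝ)-1)/6 := by
    have : ∀ l ∈ Finset.range m, ((m:ℝ)-l)^2 = (m:ℝ)^2 - 2*(m:ℝ)*(l:ℝ) + (l:ℝ)^2 := by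
      intro l _; ring
    rw [Finset.sum_congr rfl this]
    rw [Finset.sum_add_distrib, Finset.sum_sub_distrib, ← Finset.mul_sum,
      sum_range_id_real, sum_range_sq_real, Finset.sum_const, Finset.card_range,
      nsmul_eq_mul]
    try ring
  have h3 : ∑ l ∈ Finset.range m, (4*((m:ℝ)-l)^2) = 4 * ∑ l ∈ Finset.range m, ((m:ℝ)-l)^2 := by
    rw [Finset.mul_sum]
  have hu0 : uu m 0 = (m:ℝ) := by unfold uu; simp
  rw [h3, h2, hu0]
  have hm1 : (1:ℝ) ≤ (m:ℝ) := by exact_mod_cast hm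
  nlinarith [Real.pi_pos, sq_nonneg ((m:ℝ)-1)]

lemma cN_pos (m : ℕ) (hm : 0 < m) : 0 < cN m := by
  have hmr : (0:ℝ) < (m:ℝ) := by exact_mod_cast hm
  calc (0:ℝ) < 4*π/3 * (m:ℝ)^3 := by positivity
    _ ≤ cN m := cN_lower m hm

lemma cN_symm (m : ℕ) : cN m = ∫ t in (-π)..π, NN m t := by
  have h := (NN_periodic m).intervalIntegral_add_eq (-π) 0
  rw [show -π + 2*π = π by ring, show (0:ℝ) + 2*π = 2*π by ring] at h
  unfold cN
  rw [← h]

lemma moment_bound (m : ℕ) (hm : 0 < m) :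
    ∫ t in (-π)..π, |t| * NN m t ≤ 2*π^2*(m:ℝ)^2 := by
  have hm1 : (1:ℝ) ≤ (m:ℝ) := by exact_mod_cast hm
  have hmr : (0:ℝ) < (m:ℝ) := by linarith
  have hcont : Continuous (fun t => |t| * NN m t) := continuous_abs.mul (continuous_NN m)
  have hcmul : Continuous (fun t : ℝ => t * NN m t) := continuous_id.mul (continuous_NN m)
  have hsplit : ∫ t in (-π)..π, |t| * NN m t
      = (∫ t in (-π)..(0:ℝ), |t| * NN m t) + ∫ t in (0:ℝ)..π, |t| * NN m t := by
    rw [intervalIntegral.integral_add_adjacent_intervals] <;>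
      exact hcont.intervalIntegrable _ _
  have hneg : (∫ t in (-π)..(0:ℝ), |t| * NN m t) = ∫ t in (0:ℝ)..π, |t| * NN m t := by
    have h1 : (∫ t in (0:ℝ)..π, |(-t)| * NN m (-t)) = ∫ t in (-π)..(0:ℝ), |t| * NN m t := by
      have := intervalIntegral.integral_comp_neg (a := (0:ℝ)) (b := π) (fun t => |t| * NN m t)
      simpa using this
    rw [← h1]
    refine intervalIntegral.integral_congr (fun t _ => ?_)
    rw [abs_neg, NN_even]
  have hpos : ∫ t in (0:ℝ)..π, |t| * NN m t ≤ π^2*(m:ℝ)^2 := by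
    have habs : ∫ t in (0:ℝ)..π, |t| * NN m t = ∫ t in (0:ℝ)..π, t * NN m t := by
      refine intervalIntegral.integral_congr (fun t ht => ?_)
      rw [Set.uIcc_of_le Real.pi_pos.le] at ht
      rw [abs_of_nonneg ht.1]
    rw [habs]
    have hsplit2 : ∫ t in (0:ℝ)..π, t * NN m t
        = (∫ t in (0:ℝ)..(π/m), t * NN m t) + ∫ t in (π/m)..π, t * NN m t := by
      rw [intervalIntegral.integral_add_adjacent_intervals] <;>
        exact hcmul.intervalIntegrable _ _
    have hp1 : ∫ t in (0:ℝ)..(π/m), t * NN m t ≤ π^2*(m:ℝ)^2/2 := by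
      have hb : ∫ t in (0:ℝ)..(π/m), t * NN m t ≤ ∫ t in (0:ℝ)..(π/m), (m:ℝ)^4 * t := by
        apply intervalIntegral.integral_mono_on (by positivity)
        · exact hcmul.intervalIntegrable _ _
        · apply Continuous.intervalIntegrable; continuity
        · intro t ht
          have ht0 : 0 ≤ t := ht.1
          calc t * NN m t ≤ t * (m:ℝ)^4 := by
                apply mul_le_mul_of_nonneg_left (NN_le_m4 m t) ht0
            _ = (m:ℝ)^4 * t := by ring
      have : ∫ t in (0:ℝ)..(π/m), (m:ℝ)^4 * t = (m:ℝ)^4 * ((π/m)^2/2) := by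
        rw [intervalIntegral.integral_const_mul, integral_id]
        ring
      rw [this] at hb
      calc ∫ t in (0:ℝ)..(π/m), t * NN m t ≤ (m:ℝ)^4 * ((π/m)^2/2) := hb
        _ = π^2*(m:ℝ)^2/2 := by field_simp
    have hp2 : ∫ t in (π/m)..π, t * NN m t ≤ π^2*(m:ℝ)^2/2 := by
      have hle : π/(m:ℝ) ≤ π := by
        rw [div_le_iff₀ hmr]
        nlinarith [Real.pi_pos]
      have hb : ∫ t in (π/m)..π, t * NN m t ≤ ∫ t in (π/m)..π, π^4 * (t:ℝ)^(-3 : ℤ) := by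
        apply intervalIntegral.integral_mono_on hle
        · exact hcmul.intervalIntegrable _ _
        · apply ContinuousOn.intervalIntegrable
          apply ContinuousOn.mul continuousOn_const
          apply ContinuousOn.zpow₀ continuousOn_id
          intro t ht
          rw [Set.uIcc_of_le hle] at ht
          left
          have : 0 < π/(m:ℝ) := by positivity
          exact ne_of_gt (lt_of_lt_of_le this ht.1)
        · intro t ht
          have h0 : 0 < π/(m:ℝ) := by positivity
          have ht0 : 0 < t := lt_of_lt_of_le h0 ht.1
          have hNle := NN_le_pi4 m ht0 ht.2
          calc t * NN m t ≤ t * (π^4/t^4) := mul_le_mul_of_nonneg_left hNle ht0.le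
            _ = π^4 * t^(-3:ℤ) := by
                rw [zpow_neg, zpow_ofNat]
                field_simp
      have hval : ∫ t in (π/m)..π, (t:ℝ)^(-3 : ℤ) = (π^(-2:ℤ) - (π/m)^(-2:ℤ))/(-2 : ℤ) := by
        rw [integral_zpow]
        · norm_num
        · right
          constructor
          · norm_num
          · rw [Set.uIcc_of_le hle]
            intro hc
            have : 0 < π/(m:ℝ) := by positivity
            exact absurd hc.1 (by linarith)
      rw [intervalIntegral.integral_const_mul, hval] at hb
      have heval : π^4 * ((π^(-2:ℤ) - (π/m)^(-2:ℤ))/(-2 : ℤ)) = (π^2*(m:ℝ)^2 - π^2)/2 := by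
        have e1 : ((π/(m:ℝ))^(-2:ℤ)) = (m:ℝ)^2/π^2 := by
          rw [zpow_neg, zpow_two, div_mul_div_comm, inv_div]
          ring
        have e2 : ((π:ℝ)^(-2:ℤ)) = 1/π^2 := by
          rw [zpow_neg, zpow_two, one_div]
          congr 1
          ring
        rw [e1, e2]
        have hpi := Real.pi_pos
        push_cast
        field_simp
        ring
      rw [heval] at hb
      nlinarith [hb, Real.pi_pos]
    linarith [hsplit2, hp1, hp2]
  linarith [hsplit, hneg, hpos]


def gg (f : ℝ → ℝ) (θ : ℝ) : ℝ := f (cos θ)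
def CC (f : ℝ → ℝ) (n : ℕ) : ℝ := ∫ s in (0:ℝ)..(2*π), gg f s * cos (n * s)
def ww (m l : ℕ) : ℝ := ∑ i ∈ Finset.range m, ∑ j ∈ Finset.range m,
  uu m i * uu m j * (((if i + j = l then (1:ℝ) else 0) + (if ((i:ℤ) - j).natAbs = l then 1 else 0)) / 2)
def aa (f : ℝ → ℝ) (m l : ℕ) : ℝ := ww m l * CC f l / cN m
def GG (f : ℝ → ℝ) (m : ℕ) (θ : ℝ) : ℝ :=
  (1/cN m) * ∫ t in (0:ℝ)..(2*π), gg f (θ - t) * NN m t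

section PartG
variable {f : ℝ → ℝ}

lemma continuous_gg (hfc : Continuous f) : Continuous (gg f) := hfc.comp continuous_cos

lemma gg_even (θ : ℝ) : gg f (-θ) = gg f θ := by unfold gg; rw [cos_neg]

lemma gg_periodic : Function.Periodic (gg f) (2*π) := by
  intro θ; unfold gg; rw [Real.cos_add_two_pi]

lemma abs_cos_sub_cos_le (a b : ℝ) : |cos a - cos b| ≤ |a - b| := by
  rw [Real.cos_sub_cos]
  rw [abs_mul, abs_mul]
  calc |(-2:ℝ)| * |sin ((a+b)/2)| * |sin ((a-b)/2)|
      ≤ 2 * 1 * |(a-b)/2| := by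
        apply mul_le_mul
        · apply mul_le_mul (by norm_num) (abs_sin_le_one _) (abs_nonneg _) (by norm_num)
        · exact abs_sin_le_abs
        · exact abs_nonneg _
        · norm_num
    _ = |a - b| := by rw [abs_div]; norm_num; ring

lemma lip_gg (hf : LipschitzWith 1 f) (a b : ℝ) : |gg f a - gg f b| ≤ |cos a - cos b| := by
  have := hf.dist_le_mul (cos a) (cos b)
  simpa [gg, Real.dist_eq] using this

/-- ∫ g(s) sin(ns) over a period is 0, by symmetry -/
lemma integral_gg_sin (n : ℕ) : ∫ s in (0:ℝ)..(2*π), gg f s * sin (n * s) = 0 := by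
  set h : ℝ → ℝ := fun s => gg f s * sin (n * s) with hh
  have hper : Function.Periodic h (2*π) := by
    intro s
    simp only [hh]
    rw [gg_periodic, show (n:ℝ) * (s + 2*π) = n*s + (n:ℤ)*(2*π) by push_cast; ring,
      Real.sin_add_int_mul_two_pi]
  have h1 : ∫ s in (0:ℝ)..(2*π), h s = ∫ s in (-(2*π))..(0:ℝ), h s := by
    have := hper.intervalIntegral_add_eq 0 (-(2*π))
    rw [show -(2*π) + 2*π = (0:ℝ) by ring, show (0:ℝ) + 2*π = 2*π by ring] at this
    exact this
  have h2 : ∫ s in (-(2*π))..(0:ℝ), h s = ∫ s in (0:ℝ)..(2*π), h (-s) := by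
    have := intervalIntegral.integral_comp_neg (a := (0:ℝ)) (b := 2*π) h
    rw [this]
    norm_num
  have h3 : ∀ s, h (-s) = - h s := by
    intro s
    simp only [hh]
    rw [gg_even, show (n:ℝ) * (-s) = -(n*s) by ring, Real.sin_neg]
    ring
  have h4 : ∫ s in (0:ℝ)..(2*π), h (-s) = - ∫ s in (0:ℝ)..(2*π), h s := by
    rw [intervalIntegral.integral_congr (fun s _ => h3 s)]
    exact intervalIntegral.integral_neg
  have := h1.trans (h2.trans h4)
  linarith


lemma cos_mul_cos' (a b : ℝ) : cos a * cos b = (cos (a - b) + cos (a + b)) / 2 := by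
  rw [cos_sub, cos_add]; ring

lemma cont_cosl (n : ℕ) : Continuous (fun t:ℝ => cos ((n:ℝ)*t)) :=
  Real.continuous_cos.comp (continuous_const.mul continuous_id)

lemma cont_sinl (n : ℕ) : Continuous (fun t:ℝ => sin ((n:ℝ)*t)) :=
  Real.continuous_sin.comp (continuous_const.mul continuous_id)

lemma cont_shift (hfc : Continuous f) (θ : ℝ) : Continuous (fun t => gg f (θ - t)) :=
  (continuous_gg hfc).comp (continuous_const.sub continuous_id)

lemma cont_conv_integrand (hfc : Continuous f) (θ : ℝ) (n : ℕ) :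
    Continuous (fun t => gg f (θ - t) * cos ((n:ℝ)*t)) :=
  (cont_shift hfc θ).mul (cont_cosl n)

/-- convolution against cos(nt) -/
lemma conv_cos (hfc : Continuous f) (n : ℕ) (θ : ℝ) :
    ∫ t in (0:ℝ)..(2*π), gg f (θ - t) * cos ((n:ℝ) * t)
      = CC f n * cos ((n:ℝ)*θ) := by
  have hgc := continuous_gg hfc
  have step0 : ∀ t:ℝ, gg f (θ-t) * cos ((n:ℝ)*t)
      = gg f (θ-t) * cos ((n:ℝ)*(θ-(θ-t))) := by
    intro t; congr 2; ring
  have step1 := intervalIntegral.integral_comp_sub_left (a := (0:ℝ)) (b := 2*π)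
      (fun u => gg f u * cos ((n:ℝ) * (θ - u))) θ
  have hper : Function.Periodic (fun u => gg f u * cos ((n:ℝ) * (θ - u))) (2*π) := by
    intro s
    simp only
    rw [gg_periodic, show (n:ℝ) * (θ - (s + 2*π)) = (n:ℝ)*(θ-s) - (n:ℤ)*(2*π) by push_cast; ring,
      Real.cos_sub_int_mul_two_pi]
  have step2 := hper.intervalIntegral_add_eq (θ - 2*π) 0
  rw [show θ - 2*π + 2*π = θ by ring, show (0:ℝ) + 2*π = 2*π by ring] at step2
  have expand : ∀ u:ℝ, gg f u * cos ((n:ℝ) * (θ - u))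
      = cos ((n:ℝ)*θ) * (gg f u * cos ((n:ℝ)*u)) + sin ((n:ℝ)*θ) * (gg f u * sin ((n:ℝ)*u)) := by
    intro u
    rw [show (n:ℝ)*(θ-u) = (n:ℝ)*θ - (n:ℝ)*u by ring, Real.cos_sub]
    ring
  calc ∫ t in (0:ℝ)..(2*π), gg f (θ - t) * cos ((n:ℝ) * t)
      = ∫ t in (0:ℝ)..(2*π), gg f (θ-t) * cos ((n:ℝ)*(θ-(θ-t))) :=
        intervalIntegral.integral_congr (fun t _ => step0 t)
    _ = ∫ u in (θ - 2*π)..(θ - 0), gg f u * cos ((n:ℝ) * (θ - u)) := step1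
    _ = ∫ u in (θ - 2*π)..θ, gg f u * cos ((n:ℝ) * (θ - u)) := by norm_num
    _ = ∫ u in (0:ℝ)..(2*π), gg f u * cos ((n:ℝ) * (θ - u)) := step2
    _ = ∫ u in (0:ℝ)..(2*π), (cos ((n:ℝ)*θ) * (gg f u * cos ((n:ℝ)*u))
          + sin ((n:ℝ)*θ) * (gg f u * sin ((n:ℝ)*u))) :=
        intervalIntegral.integral_congr (fun u _ => expand u)
    _ = cos ((n:ℝ)*θ) * (∫ u in (0:ℝ)..(2*π), gg f u * cos ((n:ℝ)*u))
          + sin ((n:ℝ)*θ) * (∫ u in (0:ℝ)..(2*π), gg f u * sin ((n:ℝ)*u)) := by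
        rw [intervalIntegral.integral_add
          ((continuous_const.fun_mul (hgc.fun_mul (cont_cosl n))).intervalIntegrable _ _)
          ((continuous_const.fun_mul (hgc.fun_mul (cont_sinl n))).intervalIntegrable _ _),
          intervalIntegral.integral_const_mul, intervalIntegral.integral_const_mul]
    _ = CC f n * cos ((n:ℝ)*θ) := by
        rw [integral_gg_sin]
        unfold CC
        ring

lemma natAbs_cast_real (i j : ℕ) : (((((i:ℤ) - j).natAbs : ℕ)):ℝ) = |(i:ℝ) - j| := by
  rw [Nat.cast_natAbs (α := ℝ)]
  push_cast
  ring_nf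

lemma natAbs_cos_eq (i j : ℕ) (t : ℝ) :
    cos (((((i:ℤ) - j).natAbs : ℕ):ℝ) * t) = cos (((i:ℝ) - j) * t) := by
  rw [natAbs_cast_real]
  rcases abs_choice ((i:ℝ) - j) with h2 | h2 <;> rw [h2]
  rw [show (-((i:ℝ)-j)) * t = -(((i:ℝ)-j)*t) by ring, cos_neg]

lemma gN_expand (m : ℕ) (θ t : ℝ) :
    gg f (θ - t) * NN m t = ∑ i ∈ Finset.range m, ∑ j ∈ Finset.range m,
      ((uu m i * uu m j / 2) * (gg f (θ-t) * cos (((i+j : ℕ):ℝ)*t))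
        + (uu m i * uu m j / 2) * (gg f (θ-t) * cos (((((i:ℤ) - j).natAbs : ℕ):ℝ)*t))) := by
  have hN : NN m t = ∑ i ∈ Finset.range m, ∑ j ∈ Finset.range m,
      ((uu m i * uu m j / 2) * cos (((i+j : ℕ):ℝ)*t)
        + (uu m i * uu m j / 2) * cos (((((i:ℤ) - j).natAbs : ℕ):ℝ)*t)) := by
    unfold NN Fej
    rw [sq, Finset.sum_mul_sum]
    refine Finset.sum_congr rfl (fun i _ => Finset.sum_congr rfl (fun j _ => ?_))
    rw [natAbs_cos_eq, show uu m i * cos ((i:ℝ)*t) * (uu m j * cos ((j:ℝ)*t))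
      = uu m i * uu m j * (cos ((i:ℝ)*t) * cos ((j:ℝ)*t)) by ring,
      cos_mul_cos' ((i:ℝ)*t) ((j:ℝ)*t)]
    push_cast
    ring
  rw [hN, Finset.mul_sum]
  refine Finset.sum_congr rfl (fun i _ => ?_)
  rw [Finset.mul_sum]
  refine Finset.sum_congr rfl (fun j _ => by ring)

lemma conv_pair (hfc : Continuous f) (m : ℕ) (i j : ℕ) (θ : ℝ) :
    (∫ t in (0:ℝ)..(2*π),
      ((uu m i * uu m j / 2) * (gg f (θ-t) * cos (((i+j : ℕ):ℝ)*t))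
        + (uu m i * uu m j / 2) * (gg f (θ-t) * cos (((((i:ℤ) - j).natAbs : ℕ):ℝ)*t))))
    = (uu m i * uu m j / 2) * (CC f (i+j) * cos (((i+j:ℕ):ℝ)*θ))
      + (uu m i * uu m j / 2) * (CC f (((i:ℤ) - j).natAbs) * cos (((((i:ℤ) - j).natAbs:ℕ):ℝ)*θ)) := by
  rw [intervalIntegral.integral_add
    ((continuous_const.fun_mul (cont_conv_integrand hfc θ (i+j))).intervalIntegrable _ _)
    ((continuous_const.fun_mul (cont_conv_integrand hfc θ (((i:ℤ) - j).natAbs))).intervalIntegrable _ _),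
    intervalIntegral.integral_const_mul, intervalIntegral.integral_const_mul,
    conv_cos hfc (i+j) θ, conv_cos hfc (((i:ℤ) - j).natAbs) θ]

lemma cont_pair (hfc : Continuous f) (m : ℕ) (i j : ℕ) (θ : ℝ) :
    Continuous (fun t =>
      ((uu m i * uu m j / 2) * (gg f (θ-t) * cos (((i+j : ℕ):ℝ)*t))
        + (uu m i * uu m j / 2) * (gg f (θ-t) * cos (((((i:ℤ) - j).natAbs : ℕ):ℝ)*t)))) :=
  (continuous_const.mul (cont_conv_integrand hfc θ (i+j))).add
    (continuous_const.mul (cont_conv_integrand hfc θ (((i:ℤ) - j).natAbs)))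

/-- The key expansion of the smoothed function as a cosine polynomial. -/
lemma GG_eq_sum (hfc : Continuous f) (m K : ℕ) (hm : 0 < m) (hdeg : 2*m ≤ K + 2) (θ : ℝ) :
    GG f m θ = ∑ l ∈ Finset.range (K+1), aa f m l * cos ((l:ℝ)*θ) := by
  have hleft : GG f m θ = (1/cN m) * ∑ i ∈ Finset.range m, ∑ j ∈ Finset.range m,
      ((uu m i * uu m j / 2) * (CC f (i+j) * cos (((i+j:ℕ):ℝ)*θ))
        + (uu m i * uu m j / 2) * (CC f (((i:ℤ) - j).natAbs) * cos (((((i:ℤ) - j).natAbs:ℕ):ℝ)*θ))) := by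
    unfold GG
    congr 1
    rw [intervalIntegral.integral_congr (fun t _ => gN_expand m θ t)]
    rw [intervalIntegral.integral_finset_sum (fun i _ => by
      apply Continuous.intervalIntegrable
      exact continuous_finset_sum _ (fun j _ => cont_pair hfc m i j θ))]
    refine Finset.sum_congr rfl (fun i _ => ?_)
    rw [intervalIntegral.integral_finset_sum (fun j _ =>
      (cont_pair hfc m i j θ).intervalIntegrable _ _)]
    exact Finset.sum_congr rfl (fun j _ => conv_pair hfc m i j θ)
  rw [hleft]
  have hright : ∑ l ∈ Finset.range (K+1), aa f m l * cos ((l:ℝ)*θ)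
      = (1/cN m) * ∑ l ∈ Finset.range (K+1), ∑ i ∈ Finset.range m, ∑ j ∈ Finset.range m,
        ((uu m i * uu m j / 2) * (if i + j = l then CC f l * cos ((l:ℝ)*θ) else 0)
          + (uu m i * uu m j / 2) * (if ((i:ℤ) - j).natAbs = l then CC f l * cos ((l:ℝ)*θ) else 0)) := by
    have hsum : ∀ l, (∑ i ∈ Finset.range m, ∑ j ∈ Finset.range m,
        ((uu m i * uu m j / 2) * (if i + j = l then CC f l * cos ((l:ℝ)*θ) else 0)
          + (uu m i * uu m j / 2) * (if ((i:ℤ) - j).natAbs = l then CC f l * cos ((l:ℝ)*θ) else 0)))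
        = ww m l * (CC f l * cos ((l:ℝ)*θ)) := by
      intro l
      unfold ww
      rw [Finset.sum_mul]
      refine Finset.sum_congr rfl (fun i _ => ?_)
      rw [Finset.sum_mul]
      refine Finset.sum_congr rfl (fun j _ => ?_)
      split_ifs <;> ring
    rw [Finset.mul_sum]
    refine Finset.sum_congr rfl (fun l _ => ?_)
    rw [hsum l]
    unfold aa
    ring
  rw [hright]
  congr 1
  have hswap : (∑ l ∈ Finset.range (K+1), ∑ i ∈ Finset.range m, ∑ j ∈ Finset.range m,
        ((uu m i * uu m j / 2) * (if i + j = l then CC f l * cos ((l:ℝ)*θ) else 0)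
          + (uu m i * uu m j / 2) * (if ((i:ℤ) - j).natAbs = l then CC f l * cos ((l:ℝ)*θ) else 0)))
      = ∑ i ∈ Finset.range m, ∑ j ∈ Finset.range m, ∑ l ∈ Finset.range (K+1),
        ((uu m i * uu m j / 2) * (if i + j = l then CC f l * cos ((l:ℝ)*θ) else 0)
          + (uu m i * uu m j / 2) * (if ((i:ℤ) - j).natAbs = l then CC f l * cos ((l:ℝ)*θ) else 0)) := by
    rw [Finset.sum_comm]
    exact Finset.sum_congr rfl (fun i _ => Finset.sum_comm)
  rw [hswap]
  refine Finset.sum_congr rfl (fun i hi => ?_)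
  refine Finset.sum_congr rfl (fun j hj => ?_)
  have hi' := Finset.mem_range.mp hi
  have hj' := Finset.mem_range.mp hj
  have hij : i + j ∈ Finset.range (K+1) := Finset.mem_range.mpr (by omega)
  have hd : ((i:ℤ) - j).natAbs ∈ Finset.range (K+1) := by
    refine Finset.mem_range.mpr ?_
    have : ((i:ℤ) - j).natAbs ≤ max i j := by
      rcases le_total i j with h | h
      · have e : (i:ℤ) - j = -((j - i : ℕ):ℤ) := by push_cast; omega
        rw [e, Int.natAbs_neg, Int.natAbs_natCast]
        omega
      · have e : (i:ℤ) - j = ((i - j : ℕ) : ℤ) := by push_cast; omega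
        rw [e, Int.natAbs_natCast]
        omega
    omega
  rw [Finset.sum_add_distrib, ← Finset.mul_sum, ← Finset.mul_sum,
    Finset.sum_ite_eq (Finset.range (K+1)) (i+j) (fun l => CC f l * cos ((l:ℝ)*θ)),
    Finset.sum_ite_eq (Finset.range (K+1)) (((i:ℤ) - j).natAbs) (fun l => CC f l * cos ((l:ℝ)*θ))]
  simp only [hij, hd, if_true]

/-- Symmetric form of GG over [-π, π]. -/
lemma GG_symm (hfc : Continuous f) (m : ℕ) (θ : ℝ) :
    GG f m θ = (1/cN m) * ∫ t in (-π)..π, gg f (θ - t) * NN m t := by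
  have hper : Function.Periodic (fun t => gg f (θ - t) * NN m t) (2*π) := by
    intro s
    simp only
    rw [show θ - (s + 2*π) = (θ - s) - 2*π by ring]
    rw [show gg f ((θ - s) - 2*π) = gg f (θ - s) from (gg_periodic (f := f)).sub_eq (θ - s)]
    rw [NN_periodic]
  have h := hper.intervalIntegral_add_eq (-π) 0
  rw [show -π + 2*π = π by ring, show (0:ℝ) + 2*π = 2*π by ring] at h
  unfold GG
  rw [h]

/-- The sup-error bound. -/
lemma GG_err (hfc : Continuous f) (hf : LipschitzWith 1 f) (m : ℕ) (hm : 0 < m) (θ : ℝ) :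
    |GG f m θ - gg f θ| ≤ 3*π/(2*(m:ℝ)) := by
  have hgc := continuous_gg hfc
  have hc := cN_pos m hm
  have hmr : (0:ℝ) < m := by exact_mod_cast hm
  have hgθ : gg f θ = (1/cN m) * ∫ t in (-π)..π, gg f θ * NN m t := by
    rw [intervalIntegral.integral_const_mul, ← cN_symm]
    field_simp
  rw [GG_symm hfc m θ]
  nth_rewrite 1 [hgθ]
  rw [← mul_sub, ← intervalIntegral.integral_sub
    (((cont_shift hfc θ).fun_mul (continuous_NN m)).intervalIntegrable _ _)
    ((continuous_const.fun_mul (continuous_NN m)).intervalIntegrable _ _)]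
  rw [abs_mul, abs_of_pos (by positivity : (0:ℝ) < 1/cN m)]
  have hb1 : |∫ t in (-π)..π, (gg f (θ-t) * NN m t - gg f θ * NN m t)|
      ≤ ∫ t in (-π)..π, |t| * NN m t := by
    calc |∫ t in (-π)..π, (gg f (θ-t) * NN m t - gg f θ * NN m t)|
        ≤ ∫ t in (-π)..π, |gg f (θ-t) * NN m t - gg f θ * NN m t| := by
          apply intervalIntegral.abs_integral_le_integral_abs
          linarith [Real.pi_pos]
      _ ≤ ∫ t in (-π)..π, |t| * NN m t := by
          apply intervalIntegral.integral_mono_on (by linarith [Real.pi_pos])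
          · exact (Continuous.abs (((cont_shift hfc θ).mul (continuous_NN m)).sub
              (continuous_const.mul (continuous_NN m)))).intervalIntegrable _ _
          · exact (continuous_abs.mul (continuous_NN m)).intervalIntegrable _ _
          · intro t _
            rw [show gg f (θ-t) * NN m t - gg f θ * NN m t = (gg f (θ-t) - gg f θ) * NN m t by ring,
              abs_mul, abs_of_nonneg (NN_nonneg m t)]
            apply mul_le_mul_of_nonneg_right _ (NN_nonneg m t)
            calc |gg f (θ-t) - gg f θ| ≤ |cos (θ-t) - cos θ| := lip_gg hf _ _
              _ ≤ |(θ-t) - θ| := abs_cos_sub_cos_le _ _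
              _ = |t| := by rw [show (θ-t) - θ = -t by ring, abs_neg]
  have hb2 := moment_bound m hm
  have hb3 := cN_lower m hm
  calc (1/cN m) * |∫ t in (-π)..π, (gg f (θ-t) * NN m t - gg f θ * NN m t)|
      ≤ (1/cN m) * (2*π^2*(m:ℝ)^2) :=
        mul_le_mul_of_nonneg_left (le_trans hb1 hb2) (by positivity)
    _ = (2*π^2*(m:ℝ)^2) / cN m := by ring
    _ ≤ 3*π/(2*(m:ℝ)) := by
        rw [div_le_div_iff₀ hc (by positivity)]
        have hpi := Real.pi_pos
        nlinarith [hb3]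


end PartG
/-- formal derivative of the cosine polynomial -/
def DD (f : ℝ → ℝ) (m K : ℕ) (θ : ℝ) : ℝ :=
  ∑ l ∈ Finset.range (K+1), aa f m l * (-((l:ℝ) * sin ((l:ℝ)*θ)))

def SS (f : ℝ → ℝ) (m : ℕ) (θ : ℝ) : ℝ :=
  (1/cN m) * ∫ t in (-π)..π, |sin (θ - t)| * NN m t

lemma hasDerivAt_sum_cos (f : ℝ → ℝ) (m K : ℕ) (θ : ℝ) :
    HasDerivAt (fun x => ∑ l ∈ Finset.range (K+1), aa f m l * cos ((l:ℝ)*x)) (DD f m K θ) θ := by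
  apply HasDerivAt.fun_sum
  intro l _
  exact (hasDerivAt_cos_nat l θ).const_mul (aa f m l)

lemma one_sub_cos_le (h : ℝ) : 1 - cos h ≤ h^2/2 := by
  have e := Real.cos_add (h/2) (h/2)
  rw [show h/2 + h/2 = h by ring] at e
  have hpyth := Real.sin_sq_add_cos_sq (h/2)
  have hs : sin (h/2)^2 ≤ (h/2)^2 := by
    have h0 := abs_sin_le_abs (x := h/2)
    have h1 : |sin (h/2)|^2 ≤ |h/2|^2 := pow_le_pow_left₀ (abs_nonneg _) h0 2
    rwa [sq_abs, sq_abs] at h1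
  nlinarith

lemma abs_sin_sub_le {h : ℝ} (hh : |h| ≤ 1) : |sin h - h| ≤ |h|^3/4 := by
  have key : ∀ x : ℝ, 0 ≤ x → x ≤ 1 → |sin x - x| ≤ |x|^3/4 := by
    intro x hx0 hx1
    rcases eq_or_lt_of_le hx0 with h0 | h0
    · simp [← h0]
    · have h1 := Real.sin_gt_sub_cube h0
      have h2 := Real.sin_le hx0
      rw [abs_of_nonpos (by linarith), abs_of_pos h0]
      linarith [pow_nonneg hx0 3]
  rcases le_or_gt 0 h with h0 | h0
  · exact key h h0 (by rwa [abs_of_nonneg h0] at hh)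
  · have h1 : (0:ℝ) ≤ -h := by linarith
    have h2 : -h ≤ 1 := by
      have : |(-h)| ≤ 1 := by rwa [abs_neg]
      rwa [abs_of_nonneg h1] at this
    have h3 := key (-h) h1 h2
    rw [Real.sin_neg, show -sin h - -h = -(sin h - h) by ring, abs_neg, abs_neg] at h3
    exact h3

lemma cos_diff (y h : ℝ) (hh : |h| ≤ 1) :
    |cos (y+h) - cos y| ≤ |h| * |sin y| + (h^2/2 + |h|^3/4) := by
  have e : cos (y+h) - cos y = cos y * (cos h - 1) - sin y * h - sin y * (sin h - h) := by
    rw [cos_add]; ring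
  rw [e]
  have b1 : |cos y * (cos h - 1)| ≤ h^2/2 := by
    rw [abs_mul]
    have h1 : |cos h - 1| = 1 - cos h := by
      rw [abs_of_nonpos (by linarith [Real.cos_le_one h])]; ring
    calc |cos y| * |cos h - 1| ≤ 1 * (1 - cos h) := by
          rw [h1]; apply mul_le_mul (abs_cos_le_one y) le_rfl (by linarith [Real.cos_le_one h]) zero_le_one
      _ ≤ h^2/2 := by rw [one_mul]; exact one_sub_cos_le h
  have b2 : |sin y * h| ≤ |sin y| * |h| := by rw [abs_mul]
  have b3 : |sin y * (sin h - h)| ≤ |h|^3/4 := by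
    rw [abs_mul]
    calc |sin y| * |sin h - h| ≤ 1 * (|h|^3/4) :=
          mul_le_mul (abs_sin_le_one y) (abs_sin_sub_le hh) (abs_nonneg _) zero_le_one
      _ = |h|^3/4 := one_mul _
  calc |cos y * (cos h - 1) - sin y * h - sin y * (sin h - h)|
      ≤ |cos y * (cos h - 1) - sin y * h| + |sin y * (sin h - h)| := abs_sub _ _
    _ ≤ |cos y * (cos h - 1)| + |sin y * h| + |sin y * (sin h - h)| := by
        have := abs_sub (cos y * (cos h - 1)) (sin y * h)
        linarith
    _ ≤ h^2/2 + |sin y| * |h| + |h|^3/4 := by linarith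
    _ = |h| * |sin y| + (h^2/2 + |h|^3/4) := by ring

/-- difference bound on GG -/
lemma GG_diff {f : ℝ → ℝ} (hfc : Continuous f) (hf : LipschitzWith 1 f) (m : ℕ) (hm : 0 < m)
    (θ h : ℝ) (hh : |h| ≤ 1) :
    |GG f m (θ + h) - GG f m θ| ≤ |h| * SS f m θ + (h^2/2 + |h|^3/4) := by
  have hc := cN_pos m hm
  have hNc := continuous_NN m
  rw [GG_symm hfc m (θ+h), GG_symm hfc m θ, ← mul_sub, ← intervalIntegral.integral_sub
    (((cont_shift hfc (θ+h)).fun_mul hNc).intervalIntegrable _ _)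
    (((cont_shift hfc θ).fun_mul hNc).intervalIntegrable _ _)]
  rw [abs_mul, abs_of_pos (by positivity : (0:ℝ) < 1/cN m)]
  have hb : |∫ t in (-π)..π, (gg f (θ+h-t) * NN m t - gg f (θ-t) * NN m t)|
      ≤ ∫ t in (-π)..π, (|h| * |sin (θ-t)| + (h^2/2 + |h|^3/4)) * NN m t := by
    calc |∫ t in (-π)..π, (gg f (θ+h-t) * NN m t - gg f (θ-t) * NN m t)|
        ≤ ∫ t in (-π)..π, |gg f (θ+h-t) * NN m t - gg f (θ-t) * NN m t| :=
          intervalIntegral.abs_integral_le_integral_abs (by linarith [Real.pi_pos])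
      _ ≤ ∫ t in (-π)..π, (|h| * |sin (θ-t)| + (h^2/2 + |h|^3/4)) * NN m t := by
          apply intervalIntegral.integral_mono_on (by linarith [Real.pi_pos])
          · exact (Continuous.abs (((cont_shift hfc (θ+h)).mul hNc).sub
              ((cont_shift hfc θ).mul hNc))).intervalIntegrable _ _
          · apply Continuous.intervalIntegrable
            apply Continuous.mul _ hNc
            apply Continuous.add
            · exact continuous_const.mul ((Real.continuous_sin.comp
                (continuous_const.sub continuous_id)).abs)
            · exact continuous_const
          · intro t _
            rw [show gg f (θ+h-t) * NN m t - gg f (θ-t) * NN m t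
              = (gg f (θ+h-t) - gg f (θ-t)) * NN m t by ring, abs_mul,
              abs_of_nonneg (NN_nonneg m t)]
            apply mul_le_mul_of_nonneg_right _ (NN_nonneg m t)
            calc |gg f (θ+h-t) - gg f (θ-t)| ≤ |cos (θ+h-t) - cos (θ-t)| := lip_gg hf _ _
              _ = |cos ((θ-t)+h) - cos (θ-t)| := by rw [show θ+h-t = (θ-t)+h by ring]
              _ ≤ |h| * |sin (θ-t)| + (h^2/2 + |h|^3/4) := cos_diff (θ-t) h hh
  have csin : Continuous (fun t : ℝ => |sin (θ - t)|) := by continuity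
  have hexp : ∫ t in (-π)..π, (|h| * |sin (θ-t)| + (h^2/2 + |h|^3/4)) * NN m t
      = |h| * (∫ t in (-π)..π, |sin (θ-t)| * NN m t) + (h^2/2 + |h|^3/4) * cN m := by
    have hpt : ∀ t:ℝ, (|h| * |sin (θ-t)| + (h^2/2 + |h|^3/4)) * NN m t
        = |h| * (|sin (θ-t)| * NN m t) + (h^2/2 + |h|^3/4) * NN m t := fun t => by ring
    have hi1 : IntervalIntegrable (fun t => |h| * (|sin (θ-t)| * NN m t)) volume (-π) π :=
      (continuous_const.mul (csin.mul hNc)).intervalIntegrable _ _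
    have hi2 : IntervalIntegrable (fun t => (h^2/2 + |h|^3/4) * NN m t) volume (-π) π :=
      (continuous_const.mul hNc).intervalIntegrable _ _
    rw [intervalIntegral.integral_congr (fun t _ => hpt t),
      intervalIntegral.integral_add hi1 hi2,
      intervalIntegral.integral_const_mul, intervalIntegral.integral_const_mul, ← cN_symm]
  calc (1/cN m) * |∫ t in (-π)..π, (gg f (θ+h-t) * NN m t - gg f (θ-t) * NN m t)|
      ≤ (1/cN m) * (|h| * (∫ t in (-π)..π, |sin (θ-t)| * NN m t) + (h^2/2 + |h|^3/4) * cN m) := by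
        apply mul_le_mul_of_nonneg_left _ (by positivity)
        rw [← hexp]; exact hb
    _ = |h| * SS f m θ + (h^2/2 + |h|^3/4) * (cN m / cN m) := by unfold SS; ring
    _ = |h| * SS f m θ + (h^2/2 + |h|^3/4) := by rw [div_self (ne_of_gt hc), mul_one]

/-- derivative bound -/
lemma abs_DD_le_SS {f : ℝ → ℝ} (hfc : Continuous f) (hf : LipschitzWith 1 f) (m K : ℕ)
    (hm : 0 < m)
    (hGQ : ∀ x, GG f m x = ∑ l ∈ Finset.range (K+1), aa f m l * cos ((l:ℝ)*x)) (θ : ℝ) :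
    |DD f m K θ| ≤ SS f m θ := by
  have hder : HasDerivAt (GG f m) (DD f m K θ) θ := by
    have := hasDerivAt_sum_cos f m K θ
    have hfun : (fun x => ∑ l ∈ Finset.range (K+1), aa f m l * cos ((l:ℝ)*x)) = GG f m :=
      funext (fun x => (hGQ x).symm)
    rwa [hfun] at this
  have htend : Tendsto (fun x => |slope (GG f m) θ x|) (𝓝[≠] θ) (𝓝 |DD f m K θ|) :=
    ((hasDerivAt_iff_tendsto_slope.mp hder).abs)
  have hc := cN_pos m hm
  have hSS0 : 0 ≤ SS f m θ := by
    unfold SS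
    apply mul_nonneg (by positivity)
    exact intervalIntegral.integral_nonneg (by linarith [Real.pi_pos])
      (fun u _ => mul_nonneg (abs_nonneg _) (NN_nonneg m u))
  refine le_of_forall_pos_le_add (fun ε hε => ?_)
  have hev : ∀ᶠ x in 𝓝[≠] θ, |slope (GG f m) θ x| ≤ SS f m θ + ε := by
    have hδ : 0 < min 1 ε := lt_min one_pos hε
    have hball : ∀ᶠ x in 𝓝[≠] θ, |x - θ| < min 1 ε := by
      apply eventually_nhdsWithin_of_eventually_nhds
      have := Metric.ball_mem_nhds θ hδ
      filter_upwards [this] with x hx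
      rw [Metric.mem_ball, Real.dist_eq] at hx
      exact hx
    filter_upwards [hball, self_mem_nhdsWithin] with x hx hxne
    have hxθ : x ≠ θ := hxne
    set h := x - θ with hdef
    have hh0 : h ≠ 0 := sub_ne_zero.mpr hxθ
    have hh1 : |h| ≤ 1 := le_of_lt (lt_of_lt_of_le hx (min_le_left _ _))
    have hhε : |h| ≤ ε := le_of_lt (lt_of_lt_of_le hx (min_le_right _ _))
    have hslope : slope (GG f m) θ x = (GG f m (θ + h) - GG f m θ) / h := by
      rw [slope_def_field, show θ + h = x by rw [hdef]; ring, ← hdef]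
    rw [hslope, abs_div]
    rw [div_le_iff₀ (abs_pos.mpr hh0)]
    have e1 : h^2 = |h|^2 := (sq_abs h).symm
    have e4 : |h|^2 ≤ ε * |h| := by nlinarith [abs_nonneg h]
    have e5 : |h|^3 ≤ ε * |h| := by nlinarith [abs_nonneg h, abs_nonneg h]
    have hεh : 0 ≤ ε * |h| := mul_nonneg hε.le (abs_nonneg h)
    calc |GG f m (θ + h) - GG f m θ| ≤ |h| * SS f m θ + (h^2/2 + |h|^3/4) :=
          GG_diff hfc hf m hm θ h hh1
      _ ≤ |h| * SS f m θ + ε * |h| := by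
          rw [e1]
          linarith [e4, e5]
      _ = (SS f m θ + ε) * |h| := by ring
  exact le_of_tendsto htend hev

lemma integral_DD_sq (f : ℝ → ℝ) (m K : ℕ) :
    ∫ θ in (0:ℝ)..(2*π), (DD f m K θ)^2
      = π * ∑ l ∈ Finset.range (K+1), ((l:ℝ) * aa f m l)^2 := by
  have hpt : ∀ θ:ℝ, (DD f m K θ)^2 = ∑ l ∈ Finset.range (K+1), ∑ l' ∈ Finset.range (K+1),
      (((l:ℝ) * aa f m l) * ((l':ℝ) * aa f m l')) * (sin ((l:ℝ)*θ) * sin ((l':ℝ)*θ)) := by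
    intro θ
    unfold DD
    rw [sq, Finset.sum_mul_sum]
    exact Finset.sum_congr rfl (fun l _ => Finset.sum_congr rfl (fun l' _ => by ring))
  rw [intervalIntegral.integral_congr (fun θ _ => hpt θ)]
  rw [intervalIntegral.integral_finset_sum (fun l _ => by
    apply Continuous.intervalIntegrable
    exact continuous_finset_sum _ (fun l' _ =>
      continuous_const.mul ((cont_sinl l).mul (cont_sinl l'))))]
  have hin : ∀ l ∈ Finset.range (K+1),
      (∫ θ in (0:ℝ)..(2*π), ∑ l' ∈ Finset.range (K+1),
        (((l:ℝ) * aa f m l) * ((l':ℝ) * aa f m l')) * (sin ((l:ℝ)*θ) * sin ((l':ℝ)*θ)))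
      = π * ((l:ℝ) * aa f m l)^2 := by
    intro l hl
    rw [intervalIntegral.integral_finset_sum (fun l' _ =>
      (continuous_const.fun_mul ((cont_sinl l).fun_mul (cont_sinl l'))).intervalIntegrable _ _)]
    have hper : ∀ l' ∈ Finset.range (K+1),
        (∫ θ in (0:ℝ)..(2*π), (((l:ℝ) * aa f m l) * ((l':ℝ) * aa f m l')) * (sin ((l:ℝ)*θ) * sin ((l':ℝ)*θ)))
        = if l = l' then (((l:ℝ) * aa f m l) * ((l':ℝ) * aa f m l')) * (if l = 0 then 0 else π) else 0 := by
      intro l' _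
      rw [intervalIntegral.integral_const_mul, integral_sin_mul_sin l l']
      split_ifs with h1 h2 <;> simp
    rw [Finset.sum_congr rfl hper, Finset.sum_ite_eq (Finset.range (K+1)) l
      (fun l' => (((l:ℝ) * aa f m l) * ((l':ℝ) * aa f m l')) * (if l = 0 then 0 else π))]
    simp only [hl, if_true]
    rcases eq_or_ne l 0 with h | h
    · simp [h]
    · simp only [h, if_false]
      ring
  rw [Finset.sum_congr rfl hin, ← Finset.mul_sum]

lemma SS_sq_le {f : ℝ → ℝ} (hfc : Continuous f) (m : ℕ) (hm : 0 < m) (θ : ℝ) :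
    (SS f m θ)^2 ≤ (1/cN m) * ∫ t in (-π)..π, sin (θ-t)^2 * NN m t := by
  have hc := cN_pos m hm
  have hNc := continuous_NN m
  have csin : Continuous (fun t : ℝ => |sin (θ - t)|) := by continuity
  have csin2 : Continuous (fun t : ℝ => sin (θ - t)^2) := by continuity
  have hSdef : ∫ t in (-π)..π, |sin (θ-t)| * NN m t = cN m * SS f m θ := by
    unfold SS
    field_simp
  have hE : (0:ℝ) ≤ ∫ t in (-π)..π, (|sin (θ-t)| - SS f m θ)^2 * NN m t :=
    intervalIntegral.integral_nonneg (by linarith [Real.pi_pos])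
      (fun u _ => mul_nonneg (sq_nonneg _) (NN_nonneg m u))
  have hexp : ∫ t in (-π)..π, (|sin (θ-t)| - SS f m θ)^2 * NN m t
      = (∫ t in (-π)..π, sin (θ-t)^2 * NN m t)
        - 2 * SS f m θ * (∫ t in (-π)..π, |sin (θ-t)| * NN m t)
        + (SS f m θ)^2 * cN m := by
    have hpt : ∀ t:ℝ, (|sin (θ-t)| - SS f m θ)^2 * NN m t
        = sin (θ-t)^2 * NN m t - (2 * SS f m θ) * (|sin (θ-t)| * NN m t)
          + (SS f m θ)^2 * NN m t := by
      intro t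
      have habs : |sin (θ-t)|^2 = sin (θ-t)^2 := sq_abs _
      have e : (|sin (θ-t)| - SS f m θ)^2
          = sin (θ-t)^2 - 2*SS f m θ*|sin (θ-t)| + (SS f m θ)^2 := by
        rw [sub_sq, habs]; ring
      rw [e]
      ring
    have hi1 : IntervalIntegrable (fun t => sin (θ-t)^2 * NN m t) volume (-π) π :=
      (csin2.mul hNc).intervalIntegrable _ _
    have hi2 : IntervalIntegrable (fun t => (2 * SS f m θ) * (|sin (θ-t)| * NN m t)) volume (-π) π :=
      (continuous_const.mul (csin.mul hNc)).intervalIntegrable _ _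
    have hi3 : IntervalIntegrable (fun t => (SS f m θ)^2 * NN m t) volume (-π) π :=
      (continuous_const.mul hNc).intervalIntegrable _ _
    rw [intervalIntegral.integral_congr (fun t _ => hpt t),
      intervalIntegral.integral_add (hi1.sub hi2) hi3,
      intervalIntegral.integral_sub hi1 hi2,
      intervalIntegral.integral_const_mul, intervalIntegral.integral_const_mul, ← cN_symm]
    try ring
  rw [hexp, hSdef] at hE
  rw [one_div, inv_mul_eq_div, le_div_iff₀ hc]
  nlinarith [hE]

/-- explicit formula for the quadratic average -/
lemma S2_formula {f : ℝ → ℝ} (m : ℕ) (hm : 0 < m) (θ : ℝ) :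
    (1/cN m) * ∫ t in (-π)..π, sin (θ-t)^2 * NN m t
      = 1/2 - (cos (2*θ) * (∫ t in (-π)..π, cos (2*t) * NN m t)
          + sin (2*θ) * (∫ t in (-π)..π, sin (2*t) * NN m t))/(2*cN m) := by
  have hc := cN_pos m hm
  have hNc := continuous_NN m
  have c2c : Continuous (fun t:ℝ => cos (2*t)) := by continuity
  have c2s : Continuous (fun t:ℝ => sin (2*t)) := by continuity
  have hpt : ∀ t:ℝ, sin (θ-t)^2 * NN m t
      = (1/2) * NN m t - (cos (2*θ)/2) * (cos (2*t) * NN m t)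
        - (sin (2*θ)/2) * (sin (2*t) * NN m t) := by
    intro t
    have h1 : sin (θ-t)^2 = 1/2 - cos (2*(θ-t))/2 := Real.sin_sq_eq_half_sub (θ-t)
    have h2 : cos (2*(θ-t)) = cos (2*θ) * cos (2*t) + sin (2*θ) * sin (2*t) := by
      rw [show 2*(θ-t) = 2*θ - 2*t by ring, Real.cos_sub]
    rw [h1, h2]
    ring
  have hi1 : IntervalIntegrable (fun t => (1/2 : ℝ) * NN m t) volume (-π) π :=
    (continuous_const.mul hNc).intervalIntegrable _ _
  have hi2 : IntervalIntegrable (fun t => (cos (2*θ)/2) * (cos (2*t) * NN m t)) volume (-π) π :=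
    (continuous_const.mul (c2c.mul hNc)).intervalIntegrable _ _
  have hi3 : IntervalIntegrable (fun t => (sin (2*θ)/2) * (sin (2*t) * NN m t)) volume (-π) π :=
    (continuous_const.mul (c2s.mul hNc)).intervalIntegrable _ _
  rw [intervalIntegral.integral_congr (fun t _ => hpt t),
    intervalIntegral.integral_sub (hi1.sub hi2) hi3,
    intervalIntegral.integral_sub hi1 hi2,
    intervalIntegral.integral_const_mul, intervalIntegral.integral_const_mul,
    intervalIntegral.integral_const_mul, ← cN_symm]
  field_simp
  ring

/-- main Bessel-type bound -/
lemma sum_sq_le_one {f : ℝ → ℝ} (hfc : Continuous f) (hf : LipschitzWith 1 f) (m K : ℕ)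
    (hm : 0 < m)
    (hGQ : ∀ x, GG f m x = ∑ l ∈ Finset.range (K+1), aa f m l * cos ((l:ℝ)*x)) :
    ∑ l ∈ Finset.range (K+1), ((l:ℝ) * aa f m l)^2 ≤ 1 := by
  have hc := cN_pos m hm
  have c2c : Continuous (fun θ:ℝ => cos (2*θ)) := by continuity
  have c2s : Continuous (fun θ:ℝ => sin (2*θ)) := by continuity
  set AA := ∫ t in (-π)..π, cos (2*t) * NN m t with hAA
  set BB := ∫ t in (-π)..π, sin (2*t) * NN m t with hBB
  have hmono : ∫ θ in (0:ℝ)..(2*π), (DD f m K θ)^2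
      ≤ ∫ θ in (0:ℝ)..(2*π), (1/2 - (cos (2*θ) * AA + sin (2*θ) * BB)/(2*cN m)) := by
    apply intervalIntegral.integral_mono_on (by linarith [Real.pi_pos])
    · apply Continuous.intervalIntegrable
      apply Continuous.pow
      unfold DD
      exact continuous_finset_sum _ (fun l _ => continuous_const.mul
        ((continuous_const.mul (cont_sinl l)).neg))
    · apply Continuous.intervalIntegrable
      apply Continuous.sub continuous_const
      apply Continuous.div_const
      exact (c2c.mul continuous_const).add (c2s.mul continuous_const)
    · intro θ _
      have h1 : (DD f m K θ)^2 ≤ (SS f m θ)^2 := by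
        have := abs_DD_le_SS hfc hf m K hm hGQ θ
        nlinarith [abs_nonneg (DD f m K θ), sq_abs (DD f m K θ)]
      have h2 := SS_sq_le hfc m hm θ
      have h3 := S2_formula (f := f) m hm θ
      rw [← hAA, ← hBB] at h3
      linarith [h1, h2, h3.le, h3.ge]
  have hDD := integral_DD_sq f m K
  have hS2int : ∫ θ in (0:ℝ)..(2*π), (1/2 - (cos (2*θ) * AA + sin (2*θ) * BB)/(2*cN m)) = π := by
    have hi2 : IntervalIntegrable (fun θ => (cos (2*θ) * AA + sin (2*θ) * BB)/(2*cN m)) volume 0 (2*π) := by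
      apply Continuous.intervalIntegrable
      apply Continuous.div_const
      exact (c2c.mul continuous_const).add (c2s.mul continuous_const)
    rw [intervalIntegral.integral_sub (intervalIntegrable_const) hi2]
    have e1 : ∫ θ in (0:ℝ)..(2*π), cos (2*θ) = 0 := by
      have := integral_cos_int 2
      have h2 : ((2:ℤ):ℝ) = 2 := by norm_num
      rw [h2] at this
      simpa using this
    have e2 : ∫ θ in (0:ℝ)..(2*π), sin (2*θ) = 0 := by
      have := integral_sin_int 2
      have h2 : ((2:ℤ):ℝ) = 2 := by norm_num
      rw [h2] at this
      exact this
    have hsplit : ∫ θ in (0:ℝ)..(2*π), (cos (2*θ) * AA + sin (2*θ) * BB)/(2*cN m)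
        = ((∫ θ in (0:ℝ)..(2*π), cos (2*θ)) * AA + (∫ θ in (0:ℝ)..(2*π), sin (2*θ)) * BB)/(2*cN m) := by
      rw [show (fun θ => (cos (2*θ) * AA + sin (2*θ) * BB)/(2*cN m))
          = (fun θ => (AA/(2*cN m)) * cos (2*θ) + (BB/(2*cN m)) * sin (2*θ)) from
        funext (fun θ => by ring)]
      rw [intervalIntegral.integral_add
        ((continuous_const.fun_mul c2c).intervalIntegrable _ _)
        ((continuous_const.fun_mul c2s).intervalIntegrable _ _),
        intervalIntegral.integral_const_mul, intervalIntegral.integral_const_mul]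
      ring
    rw [hsplit, e1, e2]
    simp
    ring
  rw [hDD, hS2int] at hmono
  have hπ := Real.pi_pos
  nlinarith [hmono]

lemma ae_mem_Icc {p : Measure ℝ} (hp : p (Set.Icc (-1 : ℝ) 1)ᶜ = 0) :
    ∀ᵐ x ∂p, x ∈ Set.Icc (-1:ℝ) 1 := by
  rw [MeasureTheory.ae_iff]
  exact hp

lemma integrable_of_bounded {p : Measure ℝ} [IsProbabilityMeasure p]
    (hp : p (Set.Icc (-1 : ℝ) 1)ᶜ = 0) {g : ℝ → ℝ} (hgc : Continuous g) (C : ℝ)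
    (hC : ∀ x ∈ Set.Icc (-1:ℝ) 1, |g x| ≤ C) : Integrable g p := by
  apply Integrable.mono' (integrable_const C) hgc.aestronglyMeasurable
  filter_upwards [ae_mem_Icc hp] with x hx
  simpa [Real.norm_eq_abs] using hC x hx

end ChebAux

open ChebAux

theorem chebyshev_moment_matching
    (p q : Measure ℝ) [IsProbabilityMeasure p] [IsProbabilityMeasure q]
    (hp : p (Set.Icc (-1 : ℝ) 1)ᶜ = 0) (hq : q (Set.Icc (-1 : ℝ) 1)ᶜ = 0)
    (k : ℕ) (hk : 0 < k) (Γ : ℝ) (hΓ : 0 ≤ Γ)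
    (hmom : ∑ j ∈ Finset.Icc 1 k,
        (1 / (j : ℝ) ^ 2) * ((∫ x, chebT j x ∂p) - ∫ x, chebT j x ∂q) ^ 2 ≤ Γ ^ 2)
    (f : ℝ → ℝ) (hf : LipschitzWith 1 f) :
    (∫ x, f x ∂p) - ∫ x, f x ∂q ≤ 36 / k + Γ := by
  have hfc : Continuous f := hf.continuous
  set m : ℕ := k/2 + 1 with hmdef
  have hm : 0 < m := Nat.succ_pos _
  have hdeg : 2*m ≤ k + 2 := by omega
  have hGQ : ∀ x, GG f m x = ∑ l ∈ Finset.range (k+1), aa f m l * cos ((l:ℝ)*x) :=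
    fun x => GG_eq_sum hfc m k hm hdeg x
  set E : ℝ := 3*π/(2*(m:ℝ)) with hEdef
  set P : ℝ → ℝ := fun x => ∑ l ∈ Finset.range (k+1), aa f m l * chebT l x with hPdef
  have hPc : Continuous P := continuous_finset_sum _ (fun l _ =>
    continuous_const.mul (continuous_chebT l))
  have hPcos : ∀ θ, P (cos θ) = GG f m θ := by
    intro θ
    rw [hGQ θ]
    exact Finset.sum_congr rfl (fun l _ => by rw [chebT_cos])
  have herr : ∀ x ∈ Set.Icc (-1:ℝ) 1, |f x - P x| ≤ E := by
    intro x hx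
    have hxc : cos (arccos x) = x := Real.cos_arccos hx.1 hx.2
    have h1 : gg f (arccos x) = f x := by unfold gg; rw [hxc]
    have h2 : GG f m (arccos x) = P x := by rw [← hPcos, hxc]
    rw [← h1, ← h2, abs_sub_comm]
    exact GG_err hfc hf m hm (arccos x)
  -- integrability
  have hfB : ∀ x ∈ Set.Icc (-1:ℝ) 1, |f x| ≤ |f 0| + 1 := by
    intro x hx
    have := hf.dist_le_mul x 0
    rw [Real.dist_eq, Real.dist_eq] at this
    have hx1 : |x| ≤ 1 := abs_le.mpr ⟨hx.1, hx.2⟩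
    calc |f x| = |f 0 + (f x - f 0)| := by ring_nf
      _ ≤ |f 0| + |f x - f 0| := abs_add_le _ _
      _ ≤ |f 0| + 1 := by
          have : |f x - f 0| ≤ |x - 0| := by simpa using this
          simp only [sub_zero] at this
          linarith
  have hfIp : Integrable f p := integrable_of_bounded hp hfc _ hfB
  have hfIq : Integrable f q := integrable_of_bounded hq hfc _ hfB
  have hchebIp : ∀ l : ℕ, Integrable (chebT l) p :=
    fun l => integrable_of_bounded hp (continuous_chebT l) 1 (fun x hx => abs_chebT_le l hx)
  have hchebIq : ∀ l : ℕ, Integrable (chebT l) q :=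
    fun l => integrable_of_bounded hq (continuous_chebT l) 1 (fun x hx => abs_chebT_le l hx)
  have hPIp : Integrable P p := by
    apply integrable_finset_sum
    intro l _
    exact (hchebIp l).const_mul _
  have hPIq : Integrable P q := by
    apply integrable_finset_sum
    intro l _
    exact (hchebIq l).const_mul _
  -- ∫ P dν = ∑ a_l ∫ chebT l dν
  have hPint : ∀ (ν : Measure ℝ), (∀ l : ℕ, Integrable (chebT l) ν) →
      ∫ x, P x ∂ν = ∑ l ∈ Finset.range (k+1), aa f m l * ∫ x, chebT l x ∂ν := by
    intro ν hν
    rw [hPdef]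
    rw [integral_finset_sum _ (fun l _ => (hν l).const_mul _)]
    exact Finset.sum_congr rfl (fun l _ => integral_const_mul _ _)
  -- decomposition
  have hdecomp : (∫ x, f x ∂p) - ∫ x, f x ∂q
      = ((∫ x, (f x - P x) ∂p) - ∫ x, (f x - P x) ∂q)
        + ∑ l ∈ Finset.range (k+1), aa f m l * ((∫ x, chebT l x ∂p) - ∫ x, chebT l x ∂q) := by
    rw [integral_sub hfIp hPIp, integral_sub hfIq hPIq, hPint p hchebIp, hPint q hchebIq]
    have e : ∀ l ∈ Finset.range (k+1),
        aa f m l * ((∫ x, chebT l x ∂p) - ∫ x, chebT l x ∂q)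
        = aa f m l * (∫ x, chebT l x ∂p) - aa f m l * (∫ x, chebT l x ∂q) := fun l _ => by ring
    rw [Finset.sum_congr rfl e, Finset.sum_sub_distrib]
    ring
  -- bound the approximation parts
  have hE0 : 0 ≤ E := by
    rw [hEdef]
    positivity
  have happx : ∀ (ν : Measure ℝ) [IsProbabilityMeasure ν], ν (Set.Icc (-1 : ℝ) 1)ᶜ = 0 →
      Integrable f ν → Integrable P ν → (∫ x, (f x - P x) ∂ν) ≤ E := by
    intro ν _ hν hfI hPI
    have hae : ∀ᵐ x ∂ν, f x - P x ≤ E := by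
      filter_upwards [ae_mem_Icc hν] with x hx
      have := herr x hx
      have := abs_le.mp this
      linarith [this.2]
    calc ∫ x, (f x - P x) ∂ν ≤ ∫ _x, E ∂ν :=
          integral_mono_ae (hfI.sub hPI) (integrable_const E) hae
      _ = E := by simp
  have happx2 : ∀ (ν : Measure ℝ) [IsProbabilityMeasure ν], ν (Set.Icc (-1 : ℝ) 1)ᶜ = 0 →
      Integrable f ν → Integrable P ν → -E ≤ (∫ x, (f x - P x) ∂ν) := by
    intro ν _ hν hfI hPI
    have hae : ∀ᵐ x ∂ν, -E ≤ f x - P x := by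
      filter_upwards [ae_mem_Icc hν] with x hx
      have := abs_le.mp (herr x hx)
      linarith [this.1]
    calc -E = ∫ _x, (-E) ∂ν := by simp
      _ ≤ ∫ x, (f x - P x) ∂ν := integral_mono_ae (integrable_const (-E)) (hfI.sub hPI) hae
  -- moment sum
  set Δ : ℕ → ℝ := fun l => (∫ x, chebT l x ∂p) - ∫ x, chebT l x ∂q with hΔdef
  have hΔ0 : Δ 0 = 0 := by
    have hone : ∀ x : ℝ, chebT 0 x = 1 := fun x => rfl
    have h1 : ∫ x, chebT 0 x ∂p = 1 := by simp only [hone]; simp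
    have h2 : ∫ x, chebT 0 x ∂q = 1 := by simp only [hone]; simp
    rw [hΔdef]
    simp only
    rw [h1, h2, sub_self]
  have hins : Finset.range (k+1) = insert 0 (Finset.Icc 1 k) := by
    ext x
    simp only [Finset.mem_range, Finset.mem_insert, Finset.mem_Icc]
    omega
  have hsplit0 : ∑ l ∈ Finset.range (k+1), aa f m l * Δ l
      = ∑ l ∈ Finset.Icc 1 k, aa f m l * Δ l := by
    rw [hins, Finset.sum_insert (by simp)]
    rw [hΔ0, mul_zero, zero_add]
  -- Cauchy-Schwarz
  have hCS := Finset.sum_mul_sq_le_sq_mul_sq (Finset.Icc 1 k)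
    (fun l => (l:ℝ) * aa f m l) (fun l => Δ l / l)
  have hre : ∑ l ∈ Finset.Icc 1 k, ((l:ℝ) * aa f m l) * (Δ l / l)
      = ∑ l ∈ Finset.Icc 1 k, aa f m l * Δ l := by
    refine Finset.sum_congr rfl (fun l hl => ?_)
    have hl1 : 1 ≤ l := (Finset.mem_Icc.mp hl).1
    have h0 : (l:ℝ) ≠ 0 := Nat.cast_ne_zero.mpr (by omega)
    field_simp
  have hA : ∑ l ∈ Finset.Icc 1 k, ((l:ℝ) * aa f m l)^2 ≤ 1 := by
    refine le_trans ?_ (sum_sq_le_one hfc hf m k hm hGQ)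
    apply Finset.sum_le_sum_of_subset_of_nonneg
    · intro x hx
      simp only [Finset.mem_Icc] at hx
      simp only [Finset.mem_range]
      omega
    · intro i _ _
      positivity
  have hB : ∑ l ∈ Finset.Icc 1 k, (Δ l / l)^2 ≤ Γ^2 := by
    refine le_trans (le_of_eq (Finset.sum_congr rfl (fun l hl => ?_))) hmom
    have hl1 : 1 ≤ l := (Finset.mem_Icc.mp hl).1
    have h0 : (l:ℝ) ≠ 0 := Nat.cast_ne_zero.mpr (by omega)
    rw [div_pow]
    rw [div_eq_mul_inv, ← one_div]
    simp only [hΔdef]; ring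
  have hBnn : (0:ℝ) ≤ ∑ l ∈ Finset.Icc 1 k, (Δ l / l)^2 :=
    Finset.sum_nonneg (fun l _ => sq_nonneg _)
  have hsq : (∑ l ∈ Finset.Icc 1 k, aa f m l * Δ l)^2 ≤ 1 * Γ^2 := by
    rw [← hre]
    exact le_trans hCS (mul_le_mul hA hB hBnn zero_le_one)
  have hmomle : ∑ l ∈ Finset.Icc 1 k, aa f m l * Δ l ≤ Γ := by
    nlinarith [hsq, hΓ]
  -- final assembly
  have h1 := happx p hp hfIp hPIp
  have h2 := happx2 q hq hfIq hPIq
  have hkr : (0:ℝ) < k := by exact_mod_cast hk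
  have hmr : (0:ℝ) < m := by exact_mod_cast hm
  have hm2 : (k:ℝ) + 1 ≤ 2*(m:ℝ) := by
    have : k + 1 ≤ 2*m := by omega
    exact_mod_cast this
  have hE2 : E + E ≤ 36/(k:ℝ) := by
    rw [hEdef]
    rw [show 3*π/(2*(m:ℝ)) + 3*π/(2*(m:ℝ)) = 3*π/(m:ℝ) by field_simp; ring]
    rw [div_le_div_iff₀ hmr hkr]
    have hπ4 := Real.pi_le_four
    nlinarith [Real.pi_pos]
  calc (∫ x, f x ∂p) - ∫ x, f x ∂q
      = ((∫ x, (f x - P x) ∂p) - ∫ x, (f x - P x) ∂q)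
        + ∑ l ∈ Finset.range (k+1), aa f m l * Δ l := hdecomp
    _ ≤ (E - (-E)) + Γ := by
        rw [hsplit0]
        have hs : (∫ x, (f x - P x) ∂p) - ∫ x, (f x - P x) ∂q ≤ E - (-E) := by
          linarith [h1, h2]
        linarith [hmomle, hs]
    _ = (E + E) + Γ := by ring
    _ ≤ 36/(k:ℝ) + Γ := by linarith
end
end

section
/- Moment-preserving rounding to Chebyshev nodes: let p be a probability measure supported on [-1,1], let g be a positive integer, and let x_1,…,x_g with x_i = cos((2i−1)π/(2g)) be the degree-g Chebyshev nodes. Then there exists a probability measure p̃ supported on {x_1,…,x_g} such that for every integer j ≥ 1, |∫ T_j dp − ∫ T_j dp̃| ≤ jπ/(2g). -/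
open MeasureTheory Real

noncomputable section

/-- The `i`-th of the degree-`g` Chebyshev nodes, `x_i = cos((2i−1)π/(2g))`. -/
def chebNode (g i : ℕ) : ℝ := Real.cos ((2 * (i : ℝ) - 1) * π / (2 * (g : ℝ)))

/-- Index of nearest Chebyshev node angle. -/
def nodeIdx (g : ℕ) (θ : ℝ) : ℕ := min g ((⌊(g : ℝ) * θ / π⌋).toNat + 1)

/-- Rounding map to the nearest Chebyshev node. -/
def rnd (g : ℕ) (x : ℝ) : ℝ := chebNode g (nodeIdx g (Real.arccos x))

lemma chebT_cos : ∀ (n : ℕ) (θ : ℝ), chebT n (Real.cos θ) = Real.cos (n * θ) := by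
  intro n
  induction n using Nat.twoStepInduction with
  | zero => intro θ; simp [chebT]
  | one => intro θ; simp [chebT]
  | more n ih1 ih2 =>
    intro θ
    have h1 : ((n + 2 : ℕ) : ℝ) * θ = ((n + 1 : ℕ) : ℝ) * θ + θ := by push_cast; ring
    have h2 : ((n : ℕ) : ℝ) * θ = ((n + 1 : ℕ) : ℝ) * θ - θ := by push_cast; ring
    simp only [chebT, ih1, ih2, h1, h2, Real.cos_add, Real.cos_sub]
    ring

lemma abs_cheb_le (n : ℕ) {x : ℝ} (hx : x ∈ Set.Icc (-1 : ℝ) 1) : |chebT n x| ≤ 1 := by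
  have : x = Real.cos (Real.arccos x) := (Real.cos_arccos hx.1 hx.2).symm
  rw [this, chebT_cos]
  exact Real.abs_cos_le_one _

lemma cos_lip (a b : ℝ) : |Real.cos a - Real.cos b| ≤ |a - b| := by
  rw [Real.cos_sub_cos]
  have h1 : |Real.sin ((a + b) / 2)| ≤ 1 := Real.abs_sin_le_one _
  have h2 : |Real.sin ((a - b) / 2)| ≤ |(a - b) / 2| := Real.abs_sin_le_abs
  have h3 : |(a - b) / 2| = |a - b| / 2 := by rw [abs_div]; norm_num
  calc |(-2) * Real.sin ((a + b) / 2) * Real.sin ((a - b) / 2)|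
      = 2 * |Real.sin ((a + b) / 2)| * |Real.sin ((a - b) / 2)| := by
        rw [abs_mul, abs_mul]; norm_num
    _ ≤ |a - b| := by nlinarith [abs_nonneg (Real.sin ((a - b) / 2)), abs_nonneg (a - b)]

lemma nodeIdx_mem (g : ℕ) (hg : 0 < g) (θ : ℝ) : nodeIdx g θ ∈ Finset.Icc 1 g := by
  unfold nodeIdx
  simp only [Finset.mem_Icc]
  omega

lemma node_angle_dist (g : ℕ) (hg : 0 < g) (θ : ℝ) (h0 : 0 ≤ θ) (h1 : θ ≤ π) :
    |θ - (2 * ((nodeIdx g θ : ℕ) : ℝ) - 1) * π / (2 * (g : ℝ))| ≤ π / (2 * (g : ℝ)) := by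
  have hπ : (0 : ℝ) < π := Real.pi_pos
  have hgr : (0 : ℝ) < (g : ℝ) := by exact_mod_cast hg
  set t : ℝ := (g : ℝ) * θ / π with ht
  have ht0 : 0 ≤ t := by positivity
  have htg : t ≤ (g : ℝ) := by
    rw [ht, div_le_iff₀ hπ]
    nlinarith
  have hfl0 : 0 ≤ ⌊t⌋ := Int.le_floor.2 (by exact_mod_cast ht0)
  set k : ℕ := (⌊t⌋).toNat with hk
  have hkt : ((k : ℕ) : ℝ) = (⌊t⌋ : ℝ) := by
    rw [hk]; exact_mod_cast Int.toNat_of_nonneg hfl0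
  have hkle : (k : ℝ) ≤ t := by rw [hkt]; exact Int.floor_le t
  have hklt : t < (k : ℝ) + 1 := by
    rw [hkt]; exact_mod_cast Int.lt_floor_add_one t
  set i : ℕ := nodeIdx g θ with hi
  have hidef : i = min g (k + 1) := rfl
  -- show (i:ℝ) - 1 ≤ t ∧ t ≤ i
  have hbound : ((i : ℕ) : ℝ) - 1 ≤ t ∧ t ≤ ((i : ℕ) : ℝ) := by
    rcases le_or_gt (k + 1) g with hle | hlt
    · have : i = k + 1 := by rw [hidef]; omega
      rw [this]
      push_cast
      constructor <;> linarith
    · -- k ≥ g, so t = g and i = g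
      have hkg : (g : ℝ) ≤ (k : ℝ) := by exact_mod_cast (by omega : g ≤ k)
      have htgeq : t = (g : ℝ) := le_antisymm htg (le_trans hkg hkle)
      have : i = g := by rw [hidef]; omega
      rw [this, htgeq]
      constructor <;> [linarith [hgr]; linarith]
    -- done
  -- convert to the statement
  have hθ : θ = t * π / (g : ℝ) := by
    rw [ht]; field_simp
  have key : |t - ((i : ℝ) - 1 / 2)| ≤ 1 / 2 := by
    rw [abs_le]; constructor <;> linarith [hbound.1, hbound.2]
  have hrw : θ - (2 * (i : ℝ) - 1) * π / (2 * (g : ℝ)) =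
      (t - ((i : ℝ) - 1 / 2)) * (π / (g : ℝ)) := by
    rw [hθ]; field_simp
  rw [hrw, abs_mul, abs_of_pos (div_pos hπ hgr)]
  calc |t - ((i : ℝ) - 1 / 2)| * (π / (g : ℝ))
      ≤ 1 / 2 * (π / (g : ℝ)) :=
        mul_le_mul_of_nonneg_right key (le_of_lt (div_pos hπ hgr))
    _ = π / (2 * (g : ℝ)) := by ring

lemma pointwise_bound (g : ℕ) (hg : 0 < g) (j : ℕ) {x : ℝ}
    (hx : x ∈ Set.Icc (-1 : ℝ) 1) :
    |chebT j x - chebT j (rnd g x)| ≤ (j : ℝ) * π / (2 * (g : ℝ)) := by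
  set θ : ℝ := Real.arccos x with hθ
  have hx1 : x = Real.cos θ := (Real.cos_arccos hx.1 hx.2).symm
  set i : ℕ := nodeIdx g θ with hi
  set φ : ℝ := (2 * (i : ℝ) - 1) * π / (2 * (g : ℝ)) with hφ
  have hr : rnd g x = Real.cos φ := rfl
  rw [hr, hx1, chebT_cos, chebT_cos]
  have hlip := cos_lip ((j : ℝ) * θ) ((j : ℝ) * φ)
  have hdist := node_angle_dist g hg θ (Real.arccos_nonneg x) (Real.arccos_le_pi x)
  have h1 : |(j : ℝ) * θ - (j : ℝ) * φ| = (j : ℝ) * |θ - φ| := by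
    rw [← mul_sub, abs_mul, Nat.abs_cast]
  have h2 : (j : ℝ) * |θ - φ| ≤ (j : ℝ) * (π / (2 * (g : ℝ))) :=
    mul_le_mul_of_nonneg_left hdist (Nat.cast_nonneg j)
  calc |Real.cos ((j : ℝ) * θ) - Real.cos ((j : ℝ) * φ)|
      ≤ |(j : ℝ) * θ - (j : ℝ) * φ| := hlip
    _ = (j : ℝ) * |θ - φ| := h1
    _ ≤ (j : ℝ) * (π / (2 * (g : ℝ))) := h2
    _ = (j : ℝ) * π / (2 * (g : ℝ)) := by ring

lemma rnd_measurable (g : ℕ) : Measurable (rnd g) := by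
  unfold rnd chebNode nodeIdx
  apply Measurable.comp (f := fun x : ℝ => min g ((⌊(g : ℝ) * Real.arccos x / π⌋).toNat + 1))
    (g := fun i : ℕ => Real.cos ((2 * (i : ℝ) - 1) * π / (2 * (g : ℝ))))
  · exact measurable_from_top
  · apply Measurable.min measurable_const
    apply Measurable.add_const
    apply Measurable.comp (measurable_from_top (f := Int.toNat))
    exact (((measurable_const.mul Real.measurable_arccos).div_const π).floor)

lemma chebT_continuous (n : ℕ) : Continuous (chebT n) := by
  induction n using Nat.twoStepInduction with
  | zero => simpa [chebT] using continuous_const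
  | one => simpa [chebT] using continuous_id'
  | more n ih1 ih2 =>
    show Continuous fun x => 2 * x * chebT (n + 1) x - chebT n x
    fun_prop

lemma rnd_mem (g : ℕ) (hg : 0 < g) (x : ℝ) :
    rnd g x ∈ {y : ℝ | ∃ i ∈ Finset.Icc 1 g, y = chebNode g i} :=
  ⟨nodeIdx g (Real.arccos x), nodeIdx_mem g hg _, rfl⟩

lemma rnd_mem_Icc (g : ℕ) (x : ℝ) : rnd g x ∈ Set.Icc (-1 : ℝ) 1 :=
  ⟨Real.neg_one_le_cos _, Real.cos_le_one _⟩

theorem moment_preserving_rounding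
    (p : Measure ℝ) [IsProbabilityMeasure p] (hp : p (Set.Icc (-1 : ℝ) 1)ᶜ = 0)
    (g : ℕ) (hg : 0 < g) :
    ∃ ptilde : Measure ℝ, IsProbabilityMeasure ptilde ∧
      ptilde {y : ℝ | ∃ i ∈ Finset.Icc 1 g, y = chebNode g i}ᶜ = 0 ∧
      ∀ j : ℕ, 1 ≤ j →
        |(∫ x, chebT j x ∂p) - ∫ x, chebT j x ∂ptilde| ≤ (j : ℝ) * π / (2 * g) := by
  have hmeas : Measurable (rnd g) := rnd_measurable g
  refine ⟨p.map (rnd g), Measure.isProbabilityMeasure_map hmeas.aemeasurable, ?_, ?_⟩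
  · -- support
    have hS : MeasurableSet {y : ℝ | ∃ i ∈ Finset.Icc 1 g, y = chebNode g i} := by
      have : {y : ℝ | ∃ i ∈ Finset.Icc 1 g, y = chebNode g i} =
          ⋃ i ∈ Finset.Icc 1 g, {chebNode g i} := by
        ext y; simp [Set.mem_iUnion]
      rw [this]
      exact (Finset.Icc 1 g).measurableSet_biUnion fun i _ => measurableSet_singleton _
    rw [Measure.map_apply hmeas hS.compl]
    have : rnd g ⁻¹' {y : ℝ | ∃ i ∈ Finset.Icc 1 g, y = chebNode g i}ᶜ = ∅ := by
      ext x
      simp only [Set.mem_preimage, Set.mem_compl_iff, Set.mem_empty_iff_false, iff_false,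
        not_not]
      exact rnd_mem g hg x
    rw [this, measure_empty]
  · intro j hj
    have hae : ∀ᵐ x ∂p, x ∈ Set.Icc (-1 : ℝ) 1 := by
      rw [ae_iff]
      exact hp
    have hcont := chebT_continuous j
    -- rewrite the integral over the mapped measure
    have hmap : (∫ x, chebT j x ∂(p.map (rnd g))) = ∫ x, chebT j (rnd g x) ∂p :=
      integral_map hmeas.aemeasurable hcont.aestronglyMeasurable
    rw [hmap]
    -- integrability
    have hint1 : Integrable (fun x => chebT j x) p := by
      refine ⟨(hcont.measurable.stronglyMeasurable).aestronglyMeasurable, ?_⟩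
      apply HasFiniteIntegral.of_bounded (C := 1)
      filter_upwards [hae] with x hx
      simpa using abs_cheb_le j hx
    have hint2 : Integrable (fun x => chebT j (rnd g x)) p := by
      refine ⟨((hcont.measurable.comp hmeas).stronglyMeasurable).aestronglyMeasurable, ?_⟩
      apply HasFiniteIntegral.of_bounded (C := 1)
      refine ae_of_all _ fun x => ?_
      simpa using abs_cheb_le j (rnd_mem_Icc g x)
    rw [← integral_sub hint1 hint2]
    have hbnd : ∀ᵐ x ∂p, ‖chebT j x - chebT j (rnd g x)‖ ≤ (j : ℝ) * π / (2 * (g : ℝ)) := by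
      filter_upwards [hae] with x hx
      simpa using pointwise_bound g hg j hx
    calc |∫ x, (chebT j x - chebT j (rnd g x)) ∂p|
        ≤ (j : ℝ) * π / (2 * (g : ℝ)) * (p Set.univ).toReal :=
          norm_integral_le_of_norm_le_const hbnd
      _ = (j : ℝ) * π / (2 * (g : ℝ)) := by
          simp [measure_univ]
end
end

section
/- Concentration of the weighted Gaussian noise: let k be a positive integer and σ > 0, and let η_1,…,η_k be independent random variables with η_j ~ N(0, j·σ²). Set E = Σ_{j=1}^{k} η_j²/j². Then for every β ∈ (0, 1/2), P[ E − 𝔼[E] ≥ 8·σ²·log(1/β) ] ≤ β, where log denotes the natural logarithm. -/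
open MeasureTheory Real ProbabilityTheory

noncomputable section

open Filter Set
open scoped NNReal ENNReal

lemma sum_inv_sq_le (k : ℕ) : ∑ n ∈ Finset.range k, (1:ℝ)/((n:ℝ)+1)^2 ≤ 2 := by
  have tel : ∑ n ∈ Finset.range k, ((1:ℝ)/((n:ℝ)+1) - 1/((n:ℝ)+1+1)) = 1 - 1/((k:ℝ)+1) := by
    have := Finset.sum_range_sub' (f := fun n : ℕ => (1:ℝ)/((n:ℝ)+1)) k
    simpa using this
  have hle : ∀ n ∈ Finset.range k, (1:ℝ)/((n:ℝ)+1)^2 ≤ 2*((1:ℝ)/((n:ℝ)+1) - 1/((n:ℝ)+1+1)) := by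
    intro n _
    have h3 : (1:ℝ)/((n:ℝ)+1) - 1/((n:ℝ)+1+1) = 1/(((n:ℝ)+1)*((n:ℝ)+2)) := by
      rw [div_sub_div _ _ (by positivity) (by positivity), one_mul, mul_one]
      congr 1 <;> ring
    rw [h3, mul_one_div, div_le_div_iff₀ (by positivity) (by positivity)]
    nlinarith
  calc ∑ n ∈ Finset.range k, (1:ℝ)/((n:ℝ)+1)^2
      ≤ ∑ n ∈ Finset.range k, 2*((1:ℝ)/((n:ℝ)+1) - 1/((n:ℝ)+1+1)) := Finset.sum_le_sum hle
    _ = 2*(1 - 1/((k:ℝ)+1)) := by rw [← Finset.mul_sum, tel]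
    _ ≤ 2 := by
      have : (0:ℝ) ≤ 1/((k:ℝ)+1) := by positivity
      linarith

lemma neg_log_one_sub_le {x : ℝ} (hx : x ≤ 1/2) :
    -Real.log (1-x) ≤ x + 2*x^2 := by
  have h1 : (0:ℝ) < 1 - x := by linarith
  rw [← Real.log_inv]
  have h2 := Real.log_le_sub_one_of_pos (x := (1-x)⁻¹) (by positivity)
  have h3 : (1-x)⁻¹ - 1 = x/(1-x) := by field_simp; ring
  have h4 : x/(1-x) ≤ x + 2*x^2 := by
    rw [div_le_iff₀ h1]
    nlinarith
  linarith [h3 ▸ h2]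


lemma integrable_sq_mul_exp_neg_mul_sq {b : ℝ} (hb : 0 < b) :
    Integrable (fun x : ℝ => x^2 * rexp (-b*x^2)) := by
  have hb2 : 0 < b/2 := by linarith
  refine Integrable.mono' ((integrable_exp_neg_mul_sq hb2).const_mul (2/b))
    ?_ (ae_of_all _ fun x => ?_)
  · exact ((continuous_pow 2).mul
      ((continuous_const.mul (continuous_pow 2)).rexp)).aestronglyMeasurable
  · have h1 : (b/2)*x^2 ≤ rexp ((b/2)*x^2) := by
      linarith [Real.add_one_le_exp ((b/2)*x^2)]
    have h2 : x^2 ≤ (2/b)*rexp ((b/2)*x^2) := by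
      calc x^2 = (2/b)*((b/2)*x^2) := by field_simp
        _ ≤ (2/b)*rexp ((b/2)*x^2) := by
            exact mul_le_mul_of_nonneg_left h1 (by positivity)
    rw [Real.norm_eq_abs, abs_of_nonneg (by positivity)]
    calc x^2 * rexp (-b*x^2) ≤ ((2/b)*rexp ((b/2)*x^2)) * rexp (-b*x^2) :=
          mul_le_mul_of_nonneg_right h2 (exp_nonneg _)
      _ = 2/b * rexp (-(b/2)*x^2) := by
          rw [mul_assoc, ← Real.exp_add]; ring_nf

lemma tendsto_mul_exp_neg_mul_sq {b : ℝ} (hb : 0 < b) :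
    Tendsto (fun x : ℝ => x * rexp (-b*x^2)) atTop (nhds 0) := by
  have hb2 : 0 < b/2 := by linarith
  have hlim : Tendsto (fun x : ℝ => (1+2/b) * rexp (-(b/2)*x^2)) atTop (nhds 0) := by
    rw [show (0:ℝ) = (1+2/b) * 0 by ring]
    apply Tendsto.const_mul
    apply Real.tendsto_exp_atBot.comp
    apply Tendsto.const_mul_atTop_of_neg (by linarith : -(b/2) < 0)
    exact (tendsto_pow_atTop (by norm_num)).comp tendsto_id
  apply tendsto_of_tendsto_of_tendsto_of_le_of_le' tendsto_const_nhds hlim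
  · filter_upwards [eventually_ge_atTop (0:ℝ)] with x hx
    positivity
  · filter_upwards [eventually_ge_atTop (0:ℝ)] with x hx
    have h1 : (b/2)*x^2 ≤ rexp ((b/2)*x^2) := by
      linarith [Real.add_one_le_exp ((b/2)*x^2)]
    have h2 : x ≤ (1+2/b)*rexp ((b/2)*x^2) := by
      rcases le_or_gt x 1 with h | h
      · have hexp1 : (1:ℝ) ≤ rexp ((b/2)*x^2) := by
          rw [show (1:ℝ) = rexp 0 by simp]
          exact Real.exp_le_exp.2 (by positivity)
        calc x ≤ 1 := h
          _ ≤ (1+2/b) := by linarith [div_pos two_pos hb]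
          _ = (1+2/b)*1 := (mul_one _).symm
          _ ≤ (1+2/b)*rexp ((b/2)*x^2) := by
              exact mul_le_mul_of_nonneg_left hexp1 (by positivity)
      · calc x ≤ x^2 := by nlinarith
          _ ≤ (2/b)*rexp ((b/2)*x^2) := by
              calc x^2 = (2/b)*((b/2)*x^2) := by field_simp
                _ ≤ (2/b)*rexp ((b/2)*x^2) := mul_le_mul_of_nonneg_left h1 (by positivity)
          _ ≤ (1+2/b)*rexp ((b/2)*x^2) := by
              apply mul_le_mul_of_nonneg_right (by linarith) (exp_nonneg _)
    calc x * rexp (-b*x^2) ≤ ((1+2/b)*rexp ((b/2)*x^2)) * rexp (-b*x^2) :=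
          mul_le_mul_of_nonneg_right h2 (exp_nonneg _)
      _ = (1+2/b) * rexp (-(b/2)*x^2) := by rw [mul_assoc, ← Real.exp_add]; ring_nf

lemma integral_sq_mul_exp_neg_mul_sq {b : ℝ} (hb : 0 < b) :
    ∫ x : ℝ, x^2 * rexp (-b*x^2) = Real.sqrt (π/b) / (2*b) := by
  have hint : Integrable (fun x : ℝ => x^2 * rexp (-b*x^2)) := integrable_sq_mul_exp_neg_mul_sq hb
  have hexp : Integrable (fun x : ℝ => rexp (-b*x^2)) := integrable_exp_neg_mul_sq hb
  -- FTC on Ioi 0 with f x = x * exp(-b x^2)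
  have hderiv : ∀ x ∈ Set.Ioi (0:ℝ), HasDerivAt (fun x : ℝ => x * rexp (-b*x^2))
      (rexp (-b*x^2) - 2*b*(x^2 * rexp (-b*x^2))) x := by
    intro x _
    have h1 : HasDerivAt (fun x : ℝ => -b*x^2) (-b*(2*x)) x := by
      simpa using (hasDerivAt_pow 2 x).const_mul (-b)
    have h2 : HasDerivAt (fun x : ℝ => rexp (-b*x^2)) (rexp (-b*x^2) * (-b*(2*x))) x := h1.exp
    have h3 := (hasDerivAt_id' x).mul h2
    exact h3.congr_deriv (by ring)
  have hftc := integral_Ioi_of_hasDerivAt_of_tendsto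
    (f := fun x : ℝ => x * rexp (-b*x^2))
    (f' := fun x : ℝ => rexp (-b*x^2) - 2*b*(x^2 * rexp (-b*x^2)))
    (a := 0) (m := 0)
    (by exact ((continuous_id.mul ((continuous_const.mul (continuous_pow 2)).rexp)).continuousWithinAt))
    hderiv
    ((hexp.sub (hint.const_mul (2*b))).integrableOn)
    (tendsto_mul_exp_neg_mul_sq hb)
  simp only [zero_mul, mul_zero, sub_zero, zero_sub, neg_zero] at hftc
  -- hftc : ∫ x in Ioi 0, (exp - 2b x² exp) = 0  (since f 0 = 0, m = 0)
  rw [integral_sub hexp.integrableOn (hint.const_mul (2*b)).integrableOn,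
    integral_gaussian_Ioi, MeasureTheory.integral_const_mul] at hftc
  have hIoi : ∫ x in Set.Ioi (0:ℝ), x^2 * rexp (-b*x^2) = Real.sqrt (π/b) / (4*b) := by
    have hb' : (2*b) ≠ 0 := by positivity
    field_simp at hftc ⊢
    linarith
  calc ∫ x : ℝ, x^2 * rexp (-b*x^2) = ∫ x : ℝ, |x|^2 * rexp (-b*|x|^2) := by
        congr 1; ext x; rw [sq_abs]
    _ = 2 * ∫ x in Set.Ioi (0:ℝ), x^2 * rexp (-b*x^2) :=
        integral_comp_abs (f := fun x : ℝ => x^2 * rexp (-b*x^2))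
    _ = Real.sqrt (π/b) / (2*b) := by rw [hIoi]; field_simp; ring


-- generic: integral against gaussianReal as a Lebesgue integral against the pdf
lemma gauss_pdf_eq (μ : ℝ) (v : ℝ≥0) :
    gaussianPDF μ v = fun x => ((Real.toNNReal (gaussianPDFReal μ v x) : ℝ≥0) : ℝ≥0∞) := by
  funext x; rfl

lemma integral_gaussianReal_eq {v : ℝ≥0} (hv : v ≠ 0) (g : ℝ → ℝ) :
    ∫ x, g x ∂(gaussianReal 0 v) = ∫ x, gaussianPDFReal 0 v x * g x := by
  rw [gaussianReal_of_var_ne_zero 0 hv, gauss_pdf_eq,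
    integral_withDensity_eq_integral_smul
      ((measurable_gaussianPDFReal 0 v).real_toNNReal) g]
  congr 1
  funext x
  rw [NNReal.smul_def, smul_eq_mul, Real.coe_toNNReal _ (gaussianPDFReal_nonneg 0 v x)]

lemma integrable_gaussianReal_iff {v : ℝ≥0} (hv : v ≠ 0) (g : ℝ → ℝ) :
    Integrable g (gaussianReal 0 v) ↔
      Integrable (fun x => gaussianPDFReal 0 v x * g x) volume := by
  rw [gaussianReal_of_var_ne_zero 0 hv, gauss_pdf_eq,
    integrable_withDensity_iff_integrable_smul
      ((measurable_gaussianPDFReal 0 v).real_toNNReal)]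
  constructor <;> intro h <;> refine h.congr (ae_of_all _ fun x => ?_) <;>
    simp only [NNReal.smul_def, smul_eq_mul,
      Real.coe_toNNReal _ (gaussianPDFReal_nonneg 0 v x)]

lemma gaussianPDFReal_zero_mean (v : ℝ≥0) (x : ℝ) :
    gaussianPDFReal 0 v x = (Real.sqrt (2*π*v))⁻¹ * rexp (-(1/(2*(v:ℝ))) * x^2) := by
  rw [gaussianPDFReal]
  congr 1
  rw [sub_zero]
  congr 1
  ring

section GaussComp

variable {v : ℝ≥0} {t : ℝ}

lemma gauss_pdf_mul_exp (hv : 0 < (v:ℝ)) (t : ℝ) (x : ℝ) :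
    gaussianPDFReal 0 v x * rexp (t*x^2)
      = (Real.sqrt (2*π*v))⁻¹ * rexp (-(1/(2*(v:ℝ)) - t) * x^2) := by
  rw [gaussianPDFReal_zero_mean, mul_assoc, ← Real.exp_add]
  congr 2
  ring

lemma integrable_exp_sq_gaussianReal (hv : 0 < (v:ℝ)) (ht : 2*t*(v:ℝ) < 1) :
    Integrable (fun x => rexp (t*x^2)) (gaussianReal 0 v) := by
  have hv' : v ≠ 0 := NNReal.coe_ne_zero.mp (ne_of_gt hv)
  have hb : 0 < 1/(2*(v:ℝ)) - t := by
    rw [sub_pos, lt_div_iff₀ (by positivity)]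
    linarith
  rw [integrable_gaussianReal_iff hv']
  refine Integrable.congr (((integrable_exp_neg_mul_sq hb).const_mul
    (Real.sqrt (2*π*v))⁻¹)) (ae_of_all _ fun x => ?_)
  exact (gauss_pdf_mul_exp hv t x).symm

lemma integral_exp_sq_gaussianReal (hv : 0 < (v:ℝ)) (ht : 2*t*(v:ℝ) < 1) :
    ∫ x, rexp (t*x^2) ∂(gaussianReal 0 v) = (Real.sqrt (1 - 2*t*(v:ℝ)))⁻¹ := by
  have hv' : v ≠ 0 := NNReal.coe_ne_zero.mp (ne_of_gt hv)
  have hb : 0 < 1/(2*(v:ℝ)) - t := by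
    rw [sub_pos, lt_div_iff₀ (by positivity)]
    linarith
  rw [integral_gaussianReal_eq hv']
  calc ∫ x, gaussianPDFReal 0 v x * rexp (t*x^2)
      = ∫ x, (Real.sqrt (2*π*v))⁻¹ * rexp (-(1/(2*(v:ℝ)) - t) * x^2) := by
        congr 1; funext x; rw [gauss_pdf_mul_exp hv]
    _ = (Real.sqrt (2*π*v))⁻¹ * Real.sqrt (π/(1/(2*(v:ℝ)) - t)) := by
        rw [MeasureTheory.integral_const_mul, integral_gaussian]
    _ = (Real.sqrt (1 - 2*t*(v:ℝ)))⁻¹ := by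
        rw [← Real.sqrt_inv, ← Real.sqrt_mul (by positivity), ← Real.sqrt_inv]
        congr 1
        rw [eq_comm, inv_eq_iff_eq_inv, eq_comm]
        field_simp

lemma gauss_pdf_mul_sq (v : ℝ≥0) (x : ℝ) :
    gaussianPDFReal 0 v x * x^2
      = (Real.sqrt (2*π*v))⁻¹ * (x^2 * rexp (-(1/(2*(v:ℝ))) * x^2)) := by
  rw [gaussianPDFReal_zero_mean]
  ring

lemma integrable_sq_gaussianReal (hv : 0 < (v:ℝ)) :
    Integrable (fun x : ℝ => x^2) (gaussianReal 0 v) := by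
  have hv' : v ≠ 0 := NNReal.coe_ne_zero.mp (ne_of_gt hv)
  have hb : 0 < 1/(2*(v:ℝ)) := by positivity
  rw [integrable_gaussianReal_iff hv']
  refine Integrable.congr ((integrable_sq_mul_exp_neg_mul_sq hb).const_mul
    (Real.sqrt (2*π*v))⁻¹) (ae_of_all _ fun x => ?_)
  exact (gauss_pdf_mul_sq v x).symm

lemma integral_sq_gaussianReal (hv : 0 < (v:ℝ)) :
    ∫ x, x^2 ∂(gaussianReal 0 v) = (v:ℝ) := by
  have hv' : v ≠ 0 := NNReal.coe_ne_zero.mp (ne_of_gt hv)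
  have hb : 0 < 1/(2*(v:ℝ)) := by positivity
  rw [integral_gaussianReal_eq hv']
  calc ∫ x, gaussianPDFReal 0 v x * x^2
      = ∫ x, (Real.sqrt (2*π*v))⁻¹ * (x^2 * rexp (-(1/(2*(v:ℝ))) * x^2)) := by
        congr 1; funext x; rw [gauss_pdf_mul_sq]
    _ = (Real.sqrt (2*π*v))⁻¹ * (Real.sqrt (π/(1/(2*(v:ℝ)))) / (2*(1/(2*(v:ℝ))))) := by
        rw [MeasureTheory.integral_const_mul, integral_sq_mul_exp_neg_mul_sq hb]
    _ = (v:ℝ) := by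
        have h1 : π/(1/(2*(v:ℝ))) = 2*π*(v:ℝ) := by field_simp
        have h2 : Real.sqrt (2*π*(v:ℝ)) ≠ 0 := by positivity
        rw [h1]
        field_simp

lemma iIndepFun_of_ae_eq {Ω' : Type*} [MeasurableSpace Ω'] {P : Measure Ω'} {ι : Type*}
    {f g : ι → Ω' → ℝ} (hf : iIndepFun f P)
    (h : ∀ i, f i =ᵐ[P] g i) : iIndepFun g P := by
  rw [iIndepFun_iff_measure_inter_preimage_eq_mul] at hf ⊢
  intro S sets hsets
  have hset : ∀ i : ι, g i ⁻¹' sets i =ᵐ[P] f i ⁻¹' sets i := fun i => by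
    filter_upwards [h i] with ω hω
    show (g i ω ∈ sets i) = (f i ω ∈ sets i)
    rw [hω]
  have h1 : P (⋂ i ∈ S, g i ⁻¹' sets i) = P (⋂ i ∈ S, f i ⁻¹' sets i) := by
    apply measure_congr
    rw [Filter.eventuallyEq_set]
    have hall : ∀ᵐ ω ∂P, ∀ i ∈ S, (ω ∈ g i ⁻¹' sets i ↔ ω ∈ f i ⁻¹' sets i) := by
      refine S.eventually_all.2 fun i _ => ?_
      filter_upwards [h i] with ω hω
      simp only [Set.mem_preimage, hω]
    filter_upwards [hall] with ω hω
    simp only [Set.mem_iInter]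
    exact ⟨fun hm i hi => (hω i hi).1 (hm i hi), fun hm i hi => (hω i hi).2 (hm i hi)⟩
  rw [h1, hf S hsets]
  exact Finset.prod_congr rfl fun i _ => (measure_congr (hset i)).symm

theorem weighted_gaussian_noise_concentration
    {Ω : Type*} [MeasurableSpace Ω] (P : Measure Ω) [IsProbabilityMeasure P]
    (k : ℕ) (hk : 0 < k) (σ : ℝ) (hσ : 0 < σ)
    (η : Fin k → Ω → ℝ)
    (hind : iIndepFun η P)
    (hdist : ∀ j : Fin k,
      Measure.map (η j) P = gaussianReal 0 (Real.toNNReal (((j : ℕ) + 1 : ℝ) * σ ^ 2)))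
    (E : Ω → ℝ) (hE : ∀ ω, E ω = ∑ j : Fin k, (η j ω) ^ 2 / ((j : ℕ) + 1 : ℝ) ^ 2)
    (β : ℝ) (hβ : β ∈ Set.Ioo (0 : ℝ) (1 / 2)) :
    P {ω | 8 * σ ^ 2 * Real.log (1 / β) ≤ E ω - ∫ ω', E ω' ∂P} ≤ ENNReal.ofReal β := by
  obtain ⟨hβ0, hβ2⟩ := hβ
  set L : ℝ := Real.log (1/β) with hLdef
  have hL : 1/2 < L := by
    have h2 : (2:ℝ) < 1/β := by
      rw [lt_div_iff₀ hβ0]; linarith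
    have := Real.log_le_log (by norm_num) h2.le
    have hlog2 := Real.log_two_gt_d9
    calc (1:ℝ)/2 < Real.log 2 := by norm_num [hlog2]; linarith [hlog2]
      _ ≤ L := this
  have hσ2 : (0:ℝ) < σ^2 := by positivity
  set lam : ℝ := 1/(4*σ^2) with hlamdef
  have hlam : 0 < lam := by positivity
  -- notation for the index-dependent quantities
  set n : Fin k → ℝ := fun j => ((j : ℕ) + 1 : ℝ) with hndef
  have hn : ∀ j, 0 < n j := fun j => by positivity
  have hn1 : ∀ j, 1 ≤ n j := fun j => by
    simp only [hndef]; have : (0:ℝ) ≤ ((j:ℕ):ℝ) := Nat.cast_nonneg _; linarith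
  set v : Fin k → ℝ≥0 := fun j => Real.toNNReal (((j : ℕ) + 1 : ℝ) * σ ^ 2) with hvdef
  have hv : ∀ j, ((v j : ℝ≥0) : ℝ) = n j * σ^2 := fun j =>
    Real.coe_toNNReal _ (by positivity)
  have hvpos : ∀ j, 0 < ((v j : ℝ≥0) : ℝ) := fun j => by
    rw [hv]; positivity
  -- a.e.-measurable representatives
  have haem : ∀ j, AEMeasurable (η j) P := by
    intro j
    by_contra hmeas
    have h0 := hdist j
    rw [Measure.map_of_not_aemeasurable hmeas] at h0
    have h1 := congrArg (fun μ : Measure ℝ => μ Set.univ) h0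
    simp only [Measure.coe_zero, Pi.zero_apply, measure_univ] at h1
    exact zero_ne_one h1
  set η' : Fin k → Ω → ℝ := fun j => (haem j).mk (η j) with hη'def
  have hη'meas : ∀ j, Measurable (η' j) := fun j => (haem j).measurable_mk
  have haeq : ∀ j, η j =ᵐ[P] η' j := fun j => (haem j).ae_eq_mk
  have hmap' : ∀ j, Measure.map (η' j) P = gaussianReal 0 (v j) := fun j => by
    rw [← Measure.map_congr (haeq j)]; exact hdist j
  have hind' : iIndepFun η' P := iIndepFun_of_ae_eq hind haeq
  -- the squared normalized variables
  set X : Fin k → Ω → ℝ := fun j => (fun x : ℝ => x^2 / (n j)^2) ∘ η' j with hXdef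
  have hXmeas : ∀ j, Measurable (X j) := fun j =>
    ((measurable_id.pow_const 2).div_const _).comp (hη'meas j)
  have hindX : iIndepFun X P :=
    hind'.comp (fun j x => x^2 / (n j)^2)
      (fun j => (measurable_id.pow_const 2).div_const _)
  -- key scalar identities
  have hkey1 : ∀ j, 2 * (lam/(n j)^2) * ((v j : ℝ≥0) : ℝ) = 1/(2*n j) := by
    intro j
    rw [hv, hlamdef]
    have h1 := (hn j).ne'
    have h2 := hσ2.ne'
    field_simp
    ring
  have hkey1' : ∀ j, 2 * (lam/(n j)^2) * ((v j : ℝ≥0) : ℝ) < 1 := by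
    intro j
    rw [hkey1 j]
    rw [div_lt_one (by positivity)]
    linarith [hn1 j]
  -- exponent transformation: lam * X j ω = (lam/(n j)^2) * (η' j ω)^2
  have hexp_eq : ∀ j ω, lam * X j ω = (lam/(n j)^2) * (η' j ω)^2 := by
    intro j ω
    simp only [hXdef, Function.comp_apply]
    field_simp
  -- mgf of each X j
  have hmgf_j : ∀ j, mgf (X j) P lam = (Real.sqrt (1 - 1/(2*n j)))⁻¹ := by
    intro j
    have hint := integral_exp_sq_gaussianReal (v := v j) (t := lam/(n j)^2)
      (hvpos j) (hkey1' j)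
    rw [← hmap' j, integral_map (hη'meas j).aemeasurable
      (by exact ((measurable_id.pow_const 2).const_mul _).exp.aestronglyMeasurable)] at hint
    rw [hkey1 j] at hint
    rw [mgf]
    rw [← hint]
    congr 1
    funext ω
    exact congrArg rexp (hexp_eq j ω)
  -- integrability of exp(lam * X j)
  have hint_j : ∀ j, Integrable (fun ω => rexp (lam * X j ω)) P := by
    intro j
    have h1 := integrable_exp_sq_gaussianReal (v := v j) (t := lam/(n j)^2)
      (hvpos j) (hkey1' j)
    rw [← hmap' j] at h1
    have h2 := (integrable_map_measure
      (by exact ((measurable_id.pow_const 2).const_mul _).exp.aestronglyMeasurable)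
      (hη'meas j).aemeasurable).mp h1
    refine h2.congr (ae_of_all _ fun ω => ?_)
    rw [Function.comp_apply, ← hexp_eq j ω]
  -- integrability and mean of X j
  have hintX_j : ∀ j, Integrable (X j) P := by
    intro j
    have h1 := (integrable_sq_gaussianReal (v := v j) (hvpos j)).div_const ((n j)^2)
    rw [← hmap' j] at h1
    exact (integrable_map_measure
      (by exact ((measurable_id.pow_const 2).div_const _).aestronglyMeasurable)
      (hη'meas j).aemeasurable).mp h1
  have hmean_j : ∀ j, ∫ ω, X j ω ∂P = σ^2 / n j := by
    intro j
    have h1 : ∫ ω, X j ω ∂P = ∫ x, x^2/(n j)^2 ∂(Measure.map (η' j) P) := by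
      rw [integral_map (hη'meas j).aemeasurable
        (by exact ((measurable_id.pow_const 2).div_const _).aestronglyMeasurable)]
      rfl
    rw [h1, hmap' j, integral_div, integral_sq_gaussianReal (hvpos j), hv]
    have := (hn j).ne'
    field_simp
  -- the sum
  set S : Ω → ℝ := ∑ j : Fin k, X j with hSdef
  have hSapp : ∀ ω, S ω = ∑ j : Fin k, X j ω := fun ω => by
    rw [hSdef, Finset.sum_apply]
  have hES : E =ᵐ[P] S := by
    have hall : ∀ᵐ ω ∂P, ∀ j, η j ω = η' j ω := ae_all_iff.2 haeq
    filter_upwards [hall] with ω hω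
    rw [hE ω, hSapp ω]
    refine Finset.sum_congr rfl fun j _ => ?_
    rw [hω j]
    rfl
  set m : ℝ := ∫ ω', E ω' ∂P with hmdef
  have hm : m = ∑ j : Fin k, σ^2 / n j := by
    rw [hmdef, integral_congr_ae hES]
    have : ∫ ω, S ω ∂P = ∑ j : Fin k, ∫ ω, X j ω ∂P := by
      rw [hSdef]
      rw [show (∫ ω, (∑ j : Fin k, X j) ω ∂P) = ∫ ω, (∑ j : Fin k, X j ω) ∂P from by
        congr 1; funext ω; rw [Finset.sum_apply]]
      exact integral_finset_sum _ fun j _ => hintX_j j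
    rw [this]
    exact Finset.sum_congr rfl fun j _ => hmean_j j
  -- rewrite the event
  set ε : ℝ := m + 8*σ^2*L with hεdef
  have hevent : {ω | 8 * σ ^ 2 * Real.log (1 / β) ≤ E ω - ∫ ω', E ω' ∂P}
      = {ω | ε ≤ E ω} := by
    ext ω
    simp only [Set.mem_setOf_eq, ← hmdef, ← hLdef, hεdef]
    constructor <;> intro h <;> linarith
  have hmeasure_eq : P {ω | ε ≤ E ω} = P {ω | ε ≤ S ω} := by
    apply measure_congr
    rw [Filter.eventuallyEq_set]
    filter_upwards [hES] with ω hω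
    simp only [Set.mem_setOf_eq, hω]
  -- Chernoff bound
  have hintS : Integrable (fun ω => rexp (lam * (∑ j : Fin k, X j) ω)) P :=
    hindX.integrable_exp_mul_sum hXmeas (fun j _ => hint_j j)
  have hchern := measure_ge_le_exp_mul_mgf (X := ∑ j : Fin k, X j) (μ := P)
    (t := lam) ε hlam.le hintS
  have hmgfS : mgf (∑ j : Fin k, X j) P lam = ∏ j : Fin k, mgf (X j) P lam :=
    hindX.mgf_sum hXmeas Finset.univ
  -- final numeric bound
  have hfinal : rexp (-lam * ε) * ∏ j : Fin k, mgf (X j) P lam ≤ β := by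
    have hxle : ∀ j : Fin k, 1/(2*n j) ≤ 1/2 := by
      intro j
      apply div_le_div_of_nonneg_left (by norm_num) (by norm_num) (by linarith [hn1 j])
    have hfac : ∀ j : Fin k, mgf (X j) P lam
        ≤ rexp ((1/(2*n j) + 2*(1/(2*n j))^2)/2) := by
      intro j
      rw [hmgf_j j]
      set x := 1/(2*n j) with hxdef
      have hx0 : 0 < x := by rw [hxdef]; positivity
      have hx2 : x ≤ 1/2 := hxle j
      have h1x : (0:ℝ) < 1 - x := by linarith
      have hsq : 0 < Real.sqrt (1-x) := Real.sqrt_pos.2 h1x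
      rw [← Real.exp_log (inv_pos.2 hsq), Real.log_inv, Real.log_sqrt h1x.le]
      apply Real.exp_le_exp.2
      have := neg_log_one_sub_le hx2
      linarith
    have hprodle : ∏ j : Fin k, mgf (X j) P lam
        ≤ rexp (∑ j : Fin k, (1/(2*n j) + 2*(1/(2*n j))^2)/2) := by
      rw [Real.exp_sum]
      apply Finset.prod_le_prod
      · intro j _
        rw [hmgf_j j]
        positivity
      · intro j _; exact hfac j
    have hsum_eq : ∑ j : Fin k, (1/(2*n j) + 2*(1/(2*n j))^2)/2
        = lam * m + ∑ j : Fin k, 1/(4*(n j)^2) := by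
      rw [hm, Finset.mul_sum, ← Finset.sum_add_distrib]
      refine Finset.sum_congr rfl fun j _ => ?_
      have h1 := (hn j).ne'
      have h2 := hσ2.ne'
      rw [hlamdef]
      field_simp
      ring
    have hsum_le : ∑ j : Fin k, 1/(4*(n j)^2) ≤ 1/2 := by
      have h1 : ∑ j : Fin k, 1/(4*(n j)^2) = (1/4) * ∑ j : Fin k, 1/(n j)^2 := by
        rw [Finset.mul_sum]
        refine Finset.sum_congr rfl fun j _ => ?_
        field_simp
      have h2 : ∑ j : Fin k, (1:ℝ)/(n j)^2 = ∑ i ∈ Finset.range k, (1:ℝ)/((i:ℝ)+1)^2 := by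
        rw [Finset.sum_range fun i => (1:ℝ)/((i:ℝ)+1)^2]
      rw [h1, h2]
      have := sum_inv_sq_le k
      linarith
    calc rexp (-lam * ε) * ∏ j : Fin k, mgf (X j) P lam
        ≤ rexp (-lam * ε) * rexp (∑ j : Fin k, (1/(2*n j) + 2*(1/(2*n j))^2)/2) := by
          apply mul_le_mul_of_nonneg_left hprodle (Real.exp_nonneg _)
      _ = rexp (-lam * ε + (lam * m + ∑ j : Fin k, 1/(4*(n j)^2))) := by
          rw [← Real.exp_add, hsum_eq]
      _ ≤ rexp (-L) := by
          apply Real.exp_le_exp.2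
          have hle : -lam * ε + lam * m = -2*L := by
            rw [hεdef, hlamdef]
            field_simp
            ring
          have : -lam * ε + (lam * m + ∑ j : Fin k, 1/(4*(n j)^2))
              = -2*L + ∑ j : Fin k, 1/(4*(n j)^2) := by linear_combination hle
          rw [this]
          linarith
      _ = β := by
          rw [hLdef, one_div, Real.log_inv, neg_neg, Real.exp_log hβ0]
  -- put everything together
  rw [hevent, hmeasure_eq]
  have hne : P {ω | ε ≤ S ω} ≠ ⊤ := measure_ne_top _ _
  rw [← ENNReal.ofReal_toReal hne]
  apply ENNReal.ofReal_le_ofReal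
  have hSset : {ω | ε ≤ S ω} = {ω | ε ≤ (∑ j : Fin k, X j) ω} := by
    ext ω
    simp only [Set.mem_setOf_eq, hSapp ω, Finset.sum_apply]
  rw [hSset]
  calc (P {ω | ε ≤ (∑ j : Fin k, X j) ω}).toReal
      ≤ rexp (-lam * ε) * mgf (∑ j : Fin k, X j) P lam := hchern
    _ = rexp (-lam * ε) * ∏ j : Fin k, mgf (X j) P lam := by rw [hmgfS]
    _ ≤ β := hfinal
end GaussComp
end
end

section
/- Fourier expansion of the Jackson kernel: let m be a positive integer and for k ∈ {0,1,…,2m−2} define b̂(k) = Σ_{t=−m}^{m−k} (m−|t|)·(m−|t+k|), extended evenly by b̂(−k) = b̂(k). Then for every real x with sin(x/2) ≠ 0, ( sin(m·x/2)/sin(x/2) )^4 = Σ_{k=−(2m−2)}^{2m−2} b̂(|k|)·e^{i·k·x} = b̂(0) + 2·Σ_{k=1}^{2m−2} b̂(k)·cos(k·x). Moreover b̂(0) ≥ b̂(1) ≥ … ≥ b̂(2m−2) ≥ 0. -/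
open Real

noncomputable section

/-- The Fourier coefficients of the Jackson kernel:
`b̂(k) = Σ_{t=−m}^{m−k} (m−|t|)·(m−|t+k|)`. -/
def jacksonCoef (m k : ℕ) : ℝ :=
  ∑ t ∈ Finset.Icc (-(m : ℤ)) ((m : ℤ) - k),
    ((m : ℝ) - |(t : ℝ)|) * ((m : ℝ) - |(t : ℝ) + (k : ℝ)|)

namespace JK
open Finset

def Cz (m : ℕ) (t : ℤ) : ℤ := max ((m:ℤ) - |t|) 0
def C (m : ℕ) (t : ℤ) : ℝ := ((Cz m t : ℤ) : ℝ)

lemma C_nonneg (m : ℕ) (t : ℤ) : 0 ≤ C m t := by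
  simp only [C]; exact_mod_cast le_max_right _ _

lemma C_even (m : ℕ) (t : ℤ) : C m (-t) = C m t := by
  simp [C, Cz, abs_neg]

lemma C_zero (m : ℕ) (t : ℤ) (h : (m:ℤ) ≤ |t|) : C m t = 0 := by
  simp only [C, Cz]
  norm_cast
  omega

lemma C_anti (m : ℕ) {a b : ℤ} (h : |a| ≤ |b|) : C m b ≤ C m a := by
  simp only [C, Cz]
  exact_mod_cast max_le_max (by omega) le_rfl

lemma C_eq (m : ℕ) {t : ℤ} (h : |t| ≤ (m:ℤ)) : C m t = (m:ℝ) - |(t:ℝ)| := by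
  simp only [C, Cz]
  rw [max_eq_left (by omega)]
  push_cast [Int.cast_abs]
  ring

def g (m : ℕ) (k : ℤ) : ℝ := ∑ s ∈ Icc (-(m:ℤ)) ((m:ℤ)), C m s * C m (s + k)

lemma g_eq_jackson (m : ℕ) (k : ℕ) : g m k = jacksonCoef m k := by
  rw [jacksonCoef, g]
  rw [← Finset.sum_subset (Finset.Icc_subset_Icc le_rfl (by omega : (m:ℤ) - k ≤ m))]
  · apply Finset.sum_congr rfl
    intro t ht
    simp only [Finset.mem_Icc] at ht
    rw [C_eq m (by simp only [Int.abs_eq_natAbs]; omega),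
        C_eq m (by simp only [Int.abs_eq_natAbs]; omega : |t + (k:ℤ)| ≤ (m:ℤ))]
    push_cast
    ring_nf
  · intro t ht hnt
    simp only [Finset.mem_Icc] at ht hnt
    have : (m:ℤ) ≤ |t + k| := by simp only [Int.abs_eq_natAbs]; omega
    rw [C_zero m _ this, mul_zero]

lemma g_even (m : ℕ) (k : ℤ) : g m (-k) = g m k := by
  rw [g, g]
  apply Finset.sum_nbij' (fun s => -s) (fun s => -s) <;>
    simp only [Finset.mem_Icc] <;> intro a ha
  · constructor <;> omega
  · constructor <;> omega
  · ring
  · ring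
  · rw [← C_even m a, ← C_even m (a + -k)]; ring_nf

lemma g_nonneg (m : ℕ) (k : ℤ) : 0 ≤ g m k :=
  Finset.sum_nonneg fun s _ => mul_nonneg (C_nonneg m s) (C_nonneg m _)

lemma g_big (m : ℕ) (k : ℤ) (L : ℤ) (hL : (m:ℤ) ≤ L) :
    g m k = ∑ s ∈ Icc (-L) L, C m s * C m (s + k) := by
  apply Finset.sum_subset (Finset.Icc_subset_Icc (by omega) hL)
  intro s hs hns
  simp only [Finset.mem_Icc] at hs hns
  rw [C_zero m s (by simp only [Int.abs_eq_natAbs]; omega), zero_mul]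

lemma g_mono (m : ℕ) (k : ℤ) (hk : 0 ≤ k) : g m (k + 1) ≤ g m k := by
  have h1 := g_big m k (2*m + k) (by omega)
  have h2 := g_big m (k+1) (2*m + k) (by omega)
  rw [← sub_nonneg, h1, h2, ← Finset.sum_sub_distrib]
  have step1 : ∑ s ∈ Icc (-(2*(m:ℤ) + k)) (2*(m:ℤ) + k),
      (C m s * C m (s + k) - C m s * C m (s + (k+1)))
      = ∑ u ∈ Icc (-(2*(m:ℤ))) (2*(m:ℤ) + 2*k), C m (u - k) * (C m u - C m (u+1)) := by
    apply Finset.sum_nbij' (fun s => s + k) (fun u => u - k) <;>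
      simp only [Finset.mem_Icc] <;> intro a ha
    · constructor <;> omega
    · constructor <;> omega
    · ring
    · ring
    · rw [show a + k + 1 = a + (k+1) by ring, show a + k - k = a by ring]; ring
  have step2 : ∑ u ∈ Icc (-(2*(m:ℤ))) (2*(m:ℤ) + 2*k), C m (u - k) * (C m u - C m (u+1))
      = ∑ u ∈ Icc (-(m:ℤ)) ((m:ℤ) - 1), C m (u - k) * (C m u - C m (u+1)) := by
    rw [← Finset.sum_subset (show Finset.Icc (-(m:ℤ)) ((m:ℤ)-1) ⊆ Icc (-(2*(m:ℤ))) (2*(m:ℤ) + 2*k)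
      from Finset.Icc_subset_Icc (by omega) (by omega))]
    intro u hu hnu
    simp only [Finset.mem_Icc] at hu hnu
    have : C m u - C m (u + 1) = 0 := by
      rcases le_or_gt (m:ℤ) u with h | h
      · rw [C_zero m u (by simp only [Int.abs_eq_natAbs]; omega),
            C_zero m (u+1) (by simp only [Int.abs_eq_natAbs]; omega), sub_zero]
      · rw [C_zero m u (by simp only [Int.abs_eq_natAbs]; omega),
            C_zero m (u+1) (by simp only [Int.abs_eq_natAbs]; omega), sub_zero]
    rw [this, mul_zero]
  rw [step1, step2]
  have hsplit : Icc (-(m:ℤ)) ((m:ℤ)-1) = Icc (-(m:ℤ)) (-1) ∪ Icc 0 ((m:ℤ)-1) := by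
    ext u; simp only [Finset.mem_union, Finset.mem_Icc]; omega
  rw [hsplit, Finset.sum_union (by
        rw [Finset.disjoint_left]; intro a ha hb
        simp only [Finset.mem_Icc] at ha hb; omega)]
  have hneg : ∑ u ∈ Icc (-(m:ℤ)) (-1), C m (u - k) * (C m u - C m (u+1))
      = ∑ u ∈ Icc (0:ℤ) ((m:ℤ)-1), C m (u + 1 + k) * (C m (u+1) - C m u) := by
    apply Finset.sum_nbij' (fun u => -1 - u) (fun u => -1 - u) <;>
      simp only [Finset.mem_Icc] <;> intro a ha
    · constructor <;> omega
    · constructor <;> omega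
    · omega
    · omega
    · rw [show (-1:ℤ) - a + 1 + k = -(a - k) by ring, C_even,
        show (-1:ℤ) - a + 1 = -a by ring, C_even, show (-1:ℤ) - a = -(a+1) by ring, C_even]
  rw [hneg, ← Finset.sum_add_distrib]
  apply Finset.sum_nonneg
  intro u hu
  simp only [Finset.mem_Icc] at hu
  have h1 : C m (u + 1 + k) ≤ C m (u - k) := C_anti m (by
    simp only [Int.abs_eq_natAbs]; omega)
  have h2 : C m (u + 1) ≤ C m u := C_anti m (by
    simp only [Int.abs_eq_natAbs]; omega)
  nlinarith [C_nonneg m (u - k), C_nonneg m (u+1+k), C_nonneg m u, C_nonneg m (u+1)]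

lemma expsum (θ : ℝ) : Complex.exp (Complex.I * θ) - 2 + Complex.exp (-(Complex.I * θ))
    = -4 * ((Real.sin (θ/2) : ℝ) : ℂ)^2 := by
  rw [show Complex.I * (θ:ℂ) = (θ:ℂ) * Complex.I by ring, Complex.exp_mul_I,
      show -((θ:ℂ) * Complex.I) = (-θ:ℝ) * Complex.I by push_cast; ring, Complex.exp_mul_I]
  push_cast
  rw [Complex.cos_neg, Complex.sin_neg]
  have h1 := Complex.cos_two_mul ((θ:ℂ)/2)
  have h2 := Complex.sin_sq_add_cos_sq ((θ:ℂ)/2)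
  rw [show 2 * ((θ:ℂ)/2) = (θ:ℂ) by ring] at h1
  linear_combination 2 * h1 + 4*h2

lemma key (m : ℕ) (hm : 1 ≤ m) (w : ℂ) (hw : w ≠ 0) :
    (∑ t ∈ Icc (-(m:ℤ)) (m:ℤ), (C m t : ℂ) * w^(2*t)) * (w^(2:ℤ) - 2 + w^(-2:ℤ))
    = w^(2*(m:ℤ)) - 2 + w^(-(2*(m:ℤ))) := by
  have hterm : ∀ t ∈ Icc (-(m:ℤ)) (m:ℤ), (C m t : ℂ) * w^(2*t) * (w^(2:ℤ) - 2 + w^(-2:ℤ))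
      = (C m t : ℂ) * w^(2*(t+1)) - 2*((C m t : ℂ) * w^(2*t)) + (C m t : ℂ) * w^(2*(t-1)) := by
    intro t _
    rw [show 2*(t+1) = 2*t + 2 by ring, show 2*(t-1) = 2*t + (-2) by ring,
      zpow_add₀ hw, zpow_add₀ hw]
    ring
  rw [Finset.sum_mul, Finset.sum_congr rfl hterm, Finset.sum_add_distrib,
    Finset.sum_sub_distrib]
  have hCzero : ∀ t : ℤ, (m:ℤ) ≤ |t| → (C m t : ℂ) = 0 := by
    intro t ht
    have : Cz m t = 0 := by simp only [Cz, Int.abs_eq_natAbs] at ht ⊢; omega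
    simp [C, this]
  have hplus : ∑ t ∈ Icc (-(m:ℤ)) (m:ℤ), (C m t : ℂ) * w^(2*(t+1))
      = ∑ t ∈ Icc (-(m:ℤ)-1) ((m:ℤ)+1), (C m (t-1) : ℂ) * w^(2*t) := by
    rw [show Icc (-(m:ℤ)-1) ((m:ℤ)+1) = Icc (-(m:ℤ)+1) ((m:ℤ)+1) ∪ Icc (-(m:ℤ)-1) (-(m:ℤ)) by
        ext u; simp only [Finset.mem_union, Finset.mem_Icc]; omega,
      Finset.sum_union (by
        rw [Finset.disjoint_left]; intro a ha hb
        simp only [Finset.mem_Icc] at ha hb; omega)]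
    have h0 : ∑ t ∈ Icc (-(m:ℤ)-1) (-(m:ℤ)), (C m (t-1) : ℂ) * w^(2*t) = 0 := by
      apply Finset.sum_eq_zero
      intro t ht
      simp only [Finset.mem_Icc] at ht
      rw [hCzero (t-1) (by simp only [Int.abs_eq_natAbs]; omega), zero_mul]
    rw [h0, add_zero]
    apply Finset.sum_nbij' (fun t => t + 1) (fun t => t - 1) <;>
      simp only [Finset.mem_Icc] <;> intro a ha
    · constructor <;> omega
    · constructor <;> omega
    · ring
    · ring
    · rw [show a + 1 - 1 = a by ring]
  have hminus : ∑ t ∈ Icc (-(m:ℤ)) (m:ℤ), (C m t : ℂ) * w^(2*(t-1))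
      = ∑ t ∈ Icc (-(m:ℤ)-1) ((m:ℤ)+1), (C m (t+1) : ℂ) * w^(2*t) := by
    rw [show Icc (-(m:ℤ)-1) ((m:ℤ)+1) = Icc (-(m:ℤ)-1) ((m:ℤ)-1) ∪ Icc ((m:ℤ)) ((m:ℤ)+1) by
        ext u; simp only [Finset.mem_union, Finset.mem_Icc]; omega,
      Finset.sum_union (by
        rw [Finset.disjoint_left]; intro a ha hb
        simp only [Finset.mem_Icc] at ha hb; omega)]
    have h0 : ∑ t ∈ Icc ((m:ℤ)) ((m:ℤ)+1), (C m (t+1) : ℂ) * w^(2*t) = 0 := by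
      apply Finset.sum_eq_zero
      intro t ht
      simp only [Finset.mem_Icc] at ht
      rw [hCzero (t+1) (by simp only [Int.abs_eq_natAbs]; omega), zero_mul]
    rw [h0, add_zero]
    apply Finset.sum_nbij' (fun t => t - 1) (fun t => t + 1) <;>
      simp only [Finset.mem_Icc] <;> intro a ha
    · constructor <;> omega
    · constructor <;> omega
    · ring
    · ring
    · rw [show a - 1 + 1 = a by ring]
  have hmid : ∑ t ∈ Icc (-(m:ℤ)) (m:ℤ), 2*((C m t : ℂ) * w^(2*t))
      = ∑ t ∈ Icc (-(m:ℤ)-1) ((m:ℤ)+1), 2*((C m t : ℂ) * w^(2*t)) := by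
    apply Finset.sum_subset (Finset.Icc_subset_Icc (by omega) (by omega))
    intro t ht hnt
    simp only [Finset.mem_Icc] at ht hnt
    rw [hCzero t (by simp only [Int.abs_eq_natAbs]; omega), zero_mul, mul_zero]
  rw [hplus, hminus, hmid, ← Finset.sum_sub_distrib, ← Finset.sum_add_distrib]
  have hcollect : ∀ t ∈ Icc (-(m:ℤ)-1) ((m:ℤ)+1),
      (C m (t-1) : ℂ) * w^(2*t) - 2*((C m t : ℂ) * w^(2*t)) + (C m (t+1) : ℂ) * w^(2*t)
      = ((Cz m (t-1) - 2 * Cz m t + Cz m (t+1) : ℤ) : ℂ) * w^(2*t) := by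
    intro t _
    simp only [C]
    push_cast
    ring
  rw [Finset.sum_congr rfl hcollect]
  have htriple : ({-(m:ℤ), 0, (m:ℤ)} : Finset ℤ) ⊆ Icc (-(m:ℤ)-1) ((m:ℤ)+1) := by
    intro t ht
    simp only [Finset.mem_insert, Finset.mem_singleton] at ht
    simp only [Finset.mem_Icc]
    rcases ht with rfl|rfl|rfl <;> omega
  rw [← Finset.sum_subset htriple (by
    intro t ht hnt
    simp only [Finset.mem_Icc] at ht
    simp only [Finset.mem_insert, Finset.mem_singleton] at hnt
    push_neg at hnt
    have : Cz m (t-1) - 2 * Cz m t + Cz m (t+1) = 0 := by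
      simp only [Cz, Int.abs_eq_natAbs]; omega
    rw [this]
    simp)]
  have hne1 : -(m:ℤ) ≠ 0 := by omega
  have hne2 : -(m:ℤ) ≠ (m:ℤ) := by omega
  have hne3 : (0:ℤ) ≠ (m:ℤ) := by omega
  rw [Finset.sum_insert (by simp [hne1, hne2]), Finset.sum_insert (by simp [hne3]),
    Finset.sum_singleton]
  have e1 : Cz m (-(m:ℤ)-1) - 2 * Cz m (-(m:ℤ)) + Cz m (-(m:ℤ)+1) = 1 := by
    simp only [Cz, Int.abs_eq_natAbs]; omega
  have e2 : Cz m ((0:ℤ)-1) - 2 * Cz m 0 + Cz m ((0:ℤ)+1) = -2 := by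
    simp only [Cz, Int.abs_eq_natAbs]; omega
  have e3 : Cz m ((m:ℤ)-1) - 2 * Cz m (m:ℤ) + Cz m ((m:ℤ)+1) = 1 := by
    simp only [Cz, Int.abs_eq_natAbs]; omega
  rw [e1, e2, e3]
  push_cast
  rw [show 2 * -(m:ℤ) = -(2*(m:ℤ)) by ring]
  ring_nf
  rw [zpow_zero]
  ring
lemma conv (m : ℕ) (w : ℂ) (hw : w ≠ 0) :
    (∑ t ∈ Icc (-(m:ℤ)) (m:ℤ), (C m t : ℂ) * w^(2*t))^2
    = ∑ k ∈ Icc (-(2*(m:ℤ))) (2*(m:ℤ)), ((g m k : ℝ) : ℂ) * w^(2*k) := by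
  rw [sq, Finset.sum_mul_sum, ← Finset.sum_product']
  have hmaps : ∀ p ∈ (Icc (-(m:ℤ)) (m:ℤ)) ×ˢ (Icc (-(m:ℤ)) (m:ℤ)),
      p.1 + p.2 ∈ Icc (-(2*(m:ℤ))) (2*(m:ℤ)) := by
    intro p hp
    simp only [Finset.mem_product, Finset.mem_Icc] at hp ⊢
    omega
  rw [← Finset.sum_fiberwise_of_maps_to hmaps]
  apply Finset.sum_congr rfl
  intro k hk
  have hterm : ∀ p ∈ ((Icc (-(m:ℤ)) (m:ℤ)) ×ˢ (Icc (-(m:ℤ)) (m:ℤ))).filter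
      (fun p => p.1 + p.2 = k),
      (C m p.1 : ℂ) * w^(2*p.1) * ((C m p.2 : ℂ) * w^(2*p.2))
      = ((C m p.1 * C m p.2 : ℝ) : ℂ) * w^(2*k) := by
    intro p hp
    simp only [Finset.mem_filter] at hp
    rw [← hp.2]
    rw [show 2*(p.1 + p.2) = 2*p.1 + 2*p.2 by ring, zpow_add₀ hw]
    push_cast
    ring
  rw [Finset.sum_congr rfl hterm, ← Finset.sum_mul]
  congr 1
  push_cast
  have h1 : ∑ p ∈ ((Icc (-(m:ℤ)) (m:ℤ)) ×ˢ (Icc (-(m:ℤ)) (m:ℤ))).filter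
      (fun p => p.1 + p.2 = k), (C m p.1 : ℂ) * (C m p.2 : ℂ)
      = ∑ s ∈ (Icc (-(m:ℤ)) (m:ℤ)).filter (fun s => k - s ∈ Icc (-(m:ℤ)) (m:ℤ)),
        (C m s : ℂ) * (C m (k - s) : ℂ) := by
    apply Finset.sum_nbij' (fun p => p.1) (fun s => (s, k - s))
    · intro a ha
      simp only [Finset.mem_filter, Finset.mem_product, Finset.mem_Icc] at ha ⊢
      exact ⟨⟨ha.1.1.1, ha.1.1.2⟩, by omega⟩
    · intro a ha
      simp only [Finset.mem_filter, Finset.mem_product, Finset.mem_Icc] at ha ⊢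
      exact ⟨⟨ha.1, by omega⟩, by omega⟩
    · intro a ha
      obtain ⟨a1, a2⟩ := a
      simp only [Finset.mem_filter, Finset.mem_product, Finset.mem_Icc] at ha
      simp only
      rw [show k - a1 = a2 by omega]
    · intro a ha
      rfl
    · intro a ha
      obtain ⟨a1, a2⟩ := a
      simp only [Finset.mem_filter, Finset.mem_product, Finset.mem_Icc] at ha
      simp only
      rw [show k - a1 = a2 by omega]
  rw [h1, Finset.sum_filter_of_ne ?h2]
  case h2 =>
    intro s hs hne
    simp only [Finset.mem_Icc] at hs ⊢
    by_contra hmem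
    push_neg at hmem
    apply hne
    have hz : C m (k - s) = 0 := by
      apply C_zero
      simp only [Int.abs_eq_natAbs]
      rcases le_or_gt (-(m:ℤ)) (k - s) with h | h
      · have := hmem h; omega
      · omega
    rw [hz]
    push_cast
    ring
  · rw [g]
    push_cast
    apply Finset.sum_nbij' (fun s => -s) (fun s => -s)
    · intro a ha; simp only [Finset.mem_Icc] at ha ⊢; omega
    · intro a ha; simp only [Finset.mem_Icc] at ha ⊢; omega
    · intro a ha; omega
    · intro a ha; omega
    · intro a ha
      rw [← C_even m a, sub_eq_neg_add]
lemma wpow (x : ℝ) (n : ℤ) :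
    (Complex.exp (Complex.I * x / 2))^(n:ℤ) = Complex.exp (Complex.I * (n * x) / 2) := by
  rw [← Complex.exp_int_mul]
  congr 1
  push_cast
  ring

lemma fejer (m : ℕ) (hm : 1 ≤ m) (x : ℝ) (hx : Real.sin (x/2) ≠ 0) :
    ∑ t ∈ Icc (-(m:ℤ)) (m:ℤ), (C m t : ℂ) * (Complex.exp (Complex.I * x / 2))^(2*t)
    = ((Real.sin ((m:ℝ)*x/2) / Real.sin (x/2) : ℝ) : ℂ)^2 := by
  set w := Complex.exp (Complex.I * x / 2) with hwdef
  have hw : w ≠ 0 := Complex.exp_ne_zero _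
  have hk := key m hm w hw
  have hw2 : w^(2:ℤ) - 2 + w^(-2:ℤ) = -4 * ((Real.sin (x/2) : ℝ) : ℂ)^2 := by
    rw [hwdef, wpow, wpow, ← expsum x]
    congr 1
    · congr 2
      push_cast
      ring
    · congr 1
      push_cast
      ring
  have hwm : w^(2*(m:ℤ)) - 2 + w^(-(2*(m:ℤ))) = -4 * ((Real.sin ((m:ℝ)*x/2) : ℝ) : ℂ)^2 := by
    rw [hwdef, wpow, wpow, ← expsum ((m:ℝ)*x)]
    congr 1
    · congr 2
      push_cast
      ring
    · congr 1
      push_cast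
      ring
  rw [hw2, hwm] at hk
  have hs : ((Real.sin (x/2) : ℝ) : ℂ) ≠ 0 := by exact_mod_cast Complex.ofReal_ne_zero.2 hx
  rw [Complex.ofReal_div, div_pow, eq_div_iff (pow_ne_zero 2 hs)]
  linear_combination (-1/4 : ℂ) * hk


lemma g_natAbs (m : ℕ) (k : ℤ) : g m k = jacksonCoef m k.natAbs := by
  rcases Int.natAbs_eq k with h | h
  · rw [← g_eq_jackson]
    congr 1
  · rw [← g_eq_jackson, ← g_even]
    congr 1
    omega

lemma g_zero' (m : ℕ) (k : ℤ) (h : 2*(m:ℤ) - 1 ≤ |k|) : g m k = 0 := by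
  apply Finset.sum_eq_zero
  intro s hs
  simp only [Finset.mem_Icc] at hs
  by_cases hc : (m:ℤ) ≤ |s|
  · rw [C_zero m s hc, zero_mul]
  · rw [C_zero m (s+k) (by simp only [Int.abs_eq_natAbs] at h hc ⊢; omega), mul_zero]

lemma exp_cos (θ : ℝ) : Complex.exp (Complex.I * θ) + Complex.exp (-(Complex.I * θ))
    = 2 * ((Real.cos θ : ℝ) : ℂ) := by
  rw [show Complex.I * (θ:ℂ) = (θ:ℂ) * Complex.I by ring, Complex.exp_mul_I,
      show -((θ:ℂ) * Complex.I) = (-θ:ℝ) * Complex.I by push_cast; ring, Complex.exp_mul_I]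
  push_cast
  rw [Complex.cos_neg, Complex.sin_neg]
  ring

end JK

open JK

theorem jackson_kernel_fourier_expansion (m : ℕ) (hm : 0 < m) :
    (∀ x : ℝ, Real.sin (x / 2) ≠ 0 →
      ((Real.sin ((m : ℝ) * x / 2) / Real.sin (x / 2)) ^ 4 =
          jacksonCoef m 0 +
            2 * ∑ k ∈ Finset.Icc 1 (2 * m - 2), jacksonCoef m k * Real.cos ((k : ℝ) * x)) ∧
      (((Real.sin ((m : ℝ) * x / 2) / Real.sin (x / 2)) ^ 4 : ℂ) =
          ∑ k ∈ Finset.Icc (-(2 * (m : ℤ) - 2)) (2 * (m : ℤ) - 2),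
            ((jacksonCoef m k.natAbs : ℝ) : ℂ) * Complex.exp (Complex.I * (k : ℂ) * (x : ℂ)))) ∧
    (∀ k : ℕ, k + 1 ≤ 2 * m - 2 → jacksonCoef m (k + 1) ≤ jacksonCoef m k) ∧
    0 ≤ jacksonCoef m (2 * m - 2) := by
  have hm1 : 1 ≤ m := hm
  refine ⟨fun x hx => ?_, fun k _ => ?_, ?_⟩
  · set w := Complex.exp (Complex.I * x / 2) with hwdef
    have hw : w ≠ 0 := Complex.exp_ne_zero _
    have hC : (((Real.sin ((m : ℝ) * x / 2) / Real.sin (x / 2))^4 : ℝ) : ℂ) =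
        ∑ k ∈ Finset.Icc (-(2 * (m : ℤ) - 2)) (2 * (m : ℤ) - 2),
          ((jacksonCoef m k.natAbs : ℝ) : ℂ) * Complex.exp (Complex.I * (k : ℂ) * (x : ℂ)) := by
      have h1 : (((Real.sin ((m : ℝ) * x / 2) / Real.sin (x / 2))^4 : ℝ) : ℂ)
          = (∑ t ∈ Finset.Icc (-(m:ℤ)) (m:ℤ), (C m t : ℂ) * w^(2*t))^2 := by
        rw [fejer m hm1 x hx]
        push_cast
        ring
      rw [h1, conv m w hw]
      rw [← Finset.sum_subset (Finset.Icc_subset_Icc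
          (by omega : -(2*(m:ℤ)) ≤ -(2 * (m:ℤ) - 2)) (by omega : 2*(m:ℤ) - 2 ≤ 2*(m:ℤ)))
        (by
          intro k hk hnk
          simp only [Finset.mem_Icc] at hk hnk
          rw [g_zero' m k (by simp only [Int.abs_eq_natAbs]; omega)]
          push_cast
          ring)]
      apply Finset.sum_congr rfl
      intro k _
      rw [g_natAbs m k, hwdef, wpow x (2*k)]
      congr 1
      push_cast
      ring
    refine ⟨?_, by exact_mod_cast hC⟩
    -- real identity
    have hsplit : Finset.Icc (-(2 * (m:ℤ) - 2)) (2 * (m:ℤ) - 2)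
        = insert 0 (Finset.Icc (-(2 * (m:ℤ) - 2)) (-1) ∪ Finset.Icc 1 (2 * (m:ℤ) - 2)) := by
      ext u
      simp only [Finset.mem_insert, Finset.mem_union, Finset.mem_Icc]
      omega
    have h0 : (0:ℤ) ∉ Finset.Icc (-(2 * (m:ℤ) - 2)) (-1) ∪ Finset.Icc 1 (2 * (m:ℤ) - 2) := by
      simp only [Finset.mem_union, Finset.mem_Icc]
      omega
    have hdisj : Disjoint (Finset.Icc (-(2 * (m:ℤ) - 2)) (-1)) (Finset.Icc 1 (2 * (m:ℤ) - 2)) := by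
      rw [Finset.disjoint_left]
      intro a ha hb
      simp only [Finset.mem_Icc] at ha hb
      omega
    have hneg : ∑ k ∈ Finset.Icc (-(2 * (m:ℤ) - 2)) (-1),
        ((jacksonCoef m k.natAbs : ℝ) : ℂ) * Complex.exp (Complex.I * (k : ℂ) * (x : ℂ))
        = ∑ k ∈ Finset.Icc (1:ℤ) (2 * (m:ℤ) - 2),
        ((jacksonCoef m k.natAbs : ℝ) : ℂ) * Complex.exp (-(Complex.I * (k : ℂ) * (x : ℂ))) := by
      apply Finset.sum_nbij' (fun k => -k) (fun k => -k)
      · intro a ha; simp only [Finset.mem_Icc] at ha ⊢; omega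
      · intro a ha; simp only [Finset.mem_Icc] at ha ⊢; omega
      · intro a ha; omega
      · intro a ha; omega
      · intro a ha
        rw [Int.natAbs_neg]
        congr 2
        push_cast
        ring
    have hpair : ∀ k ∈ Finset.Icc (1:ℤ) (2 * (m:ℤ) - 2),
        ((jacksonCoef m k.natAbs : ℝ) : ℂ) * Complex.exp (-(Complex.I * (k : ℂ) * (x : ℂ)))
        + ((jacksonCoef m k.natAbs : ℝ) : ℂ) * Complex.exp (Complex.I * (k : ℂ) * (x : ℂ))
        = ((2 * (jacksonCoef m k.natAbs * Real.cos ((k:ℝ) * x)) : ℝ) : ℂ) := by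
      intro k hk
      simp only [Finset.mem_Icc] at hk
      obtain ⟨n, rfl⟩ : ∃ n:ℕ, k = (n:ℤ) := ⟨k.toNat, by omega⟩
      have e := exp_cos ((n:ℝ) * x)
      rw [show Complex.I * ((n:ℤ):ℂ) * (x:ℂ) = Complex.I * (((n:ℝ) * x : ℝ):ℂ) by push_cast; ring]
      push_cast at e ⊢
      rw [Int.natAbs_natCast]
      linear_combination ((jacksonCoef m n : ℝ) : ℂ) * e
    have hreal : ∑ k ∈ Finset.Icc (1:ℤ) (2 * (m:ℤ) - 2),
        2 * (jacksonCoef m k.natAbs * Real.cos ((k:ℝ) * x))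
        = 2 * ∑ k ∈ Finset.Icc 1 (2 * m - 2), jacksonCoef m k * Real.cos ((k : ℝ) * x) := by
      rw [Finset.mul_sum]
      apply Finset.sum_nbij' (fun k : ℤ => k.toNat) (fun k : ℕ => (k:ℤ))
      · intro a ha; simp only [Finset.mem_Icc] at ha ⊢; omega
      · intro a ha; simp only [Finset.mem_Icc] at ha ⊢; omega
      · intro a ha; simp only [Finset.mem_Icc] at ha; omega
      · intro a ha; simp only [Finset.mem_Icc] at ha; omega
      · intro a ha
        simp only [Finset.mem_Icc] at ha
        obtain ⟨n, rfl⟩ : ∃ q:ℕ, a = (q:ℤ) := ⟨a.toNat, by omega⟩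
        simp
    have hRC : (∑ k ∈ Finset.Icc (-(2 * (m:ℤ) - 2)) (2 * (m:ℤ) - 2),
        ((jacksonCoef m k.natAbs : ℝ) : ℂ) * Complex.exp (Complex.I * (k : ℂ) * (x : ℂ)))
        = ((jacksonCoef m 0 +
            2 * ∑ k ∈ Finset.Icc 1 (2 * m - 2), jacksonCoef m k * Real.cos ((k : ℝ) * x) : ℝ) : ℂ) := by
      rw [hsplit, Finset.sum_insert h0, Finset.sum_union hdisj, hneg,
        ← Finset.sum_add_distrib, Finset.sum_congr rfl hpair, ← Complex.ofReal_sum,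
        hreal]
      push_cast
      simp
    have := hC.trans hRC
    exact_mod_cast this
  · rw [← g_eq_jackson, ← g_eq_jackson]
    have := g_mono m (k:ℤ) (by positivity)
    push_cast
    exact_mod_cast this
  · rw [← g_eq_jackson]
    exact g_nonneg m _
end
end
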